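/- arXiv:2303.07411 — 4 statements merged into one kernel-verified Lean document; each statement's English description precedes it below -/
import Mathlib

section
/- Let u, v, s : ℝ⁴ → ℝ be smooth functions of (t, x, y, z) and let λ ∈ ℝ. Suppose that at every point s_t = J(u, s) + Δv + λ·E(u) and s_z = J(v, s) + Δu + λ·E(v). Then at every point F1 + J(F2, s) + λ·E(F2) = 0, where F1 := (Δu)_t − (Δv)_z − J(u, Δu) + J(v, Δv) and F2 := v_t − u_z − J(u, v). In particular, the overdetermined system for s is compatible exactly on solutions of the reduced magnetohydrodynamics equations. -/
noncomputable section

/-- Partial derivative in `t` of a function of `(t, x, y, z)`. -/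
def pt (f : ℝ × ℝ × ℝ × ℝ → ℝ) (P : ℝ × ℝ × ℝ × ℝ) : ℝ :=
  deriv (fun w => f (w, P.2.1, P.2.2.1, P.2.2.2)) P.1

/-- Partial derivative in `x` of a function of `(t, x, y, z)`. -/
def px (f : ℝ × ℝ × ℝ × ℝ → ℝ) (P : ℝ × ℝ × ℝ × ℝ) : ℝ :=
  deriv (fun w => f (P.1, w, P.2.2.1, P.2.2.2)) P.2.1

/-- Partial derivative in `y` of a function of `(t, x, y, z)`. -/
def py (f : ℝ × ℝ × ℝ × ℝ → ℝ) (P : ℝ × ℝ × ℝ × ℝ) : ℝ :=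
  deriv (fun w => f (P.1, P.2.1, w, P.2.2.2)) P.2.2.1

/-- Partial derivative in `z` of a function of `(t, x, y, z)`. -/
def pz (f : ℝ × ℝ × ℝ × ℝ → ℝ) (P : ℝ × ℝ × ℝ × ℝ) : ℝ :=
  deriv (fun w => f (P.1, P.2.1, P.2.2.1, w)) P.2.2.2

/-- Jacobi bracket `J(f, g) = f_x g_y - f_y g_x`. -/
def J (f g : ℝ × ℝ × ℝ × ℝ → ℝ) : ℝ × ℝ × ℝ × ℝ → ℝ :=
  fun P => px f P * py g P - py f P * px g P

/-- Planar Laplacian `Δf = f_xx + f_yy`. -/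
def lap (f : ℝ × ℝ × ℝ × ℝ → ℝ) : ℝ × ℝ × ℝ × ℝ → ℝ :=
  fun P => px (px f) P + py (py f) P

/-- The operator `E(f) = x f_x + y f_y - 2 f`. -/
def Eop (f : ℝ × ℝ × ℝ × ℝ → ℝ) : ℝ × ℝ × ℝ × ℝ → ℝ :=
  fun P => P.2.1 * px f P + P.2.2.1 * py f P - 2 * f P

/-- `F1 = (Δu)_t - (Δv)_z - J(u, Δu) + J(v, Δv)`. -/
def F1 (u v : ℝ × ℝ × ℝ × ℝ → ℝ) : ℝ × ℝ × ℝ × ℝ → ℝ :=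
  fun P => pt (lap u) P - pz (lap v) P - J u (lap u) P + J v (lap v) P

/-- `F2 = v_t - u_z - J(u, v)`. -/
def F2 (u v : ℝ × ℝ × ℝ × ℝ → ℝ) : ℝ × ℝ × ℝ × ℝ → ℝ :=
  fun P => pt v P - pz u P - J u v P


abbrev V4 := ℝ × ℝ × ℝ × ℝ

/-- Directional derivative operator. -/
def pd (a : V4) (f : V4 → ℝ) : V4 → ℝ := fun P => fderiv ℝ f P a

lemma pd_contDiff {f : V4 → ℝ} (hf : ContDiff ℝ (⊤ : ℕ∞) f) (a : V4) : ContDiff ℝ (⊤ : ℕ∞) (pd a f) :=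
  (hf.fderiv_right (le_refl _)).clm_apply contDiff_const

@[fun_prop] lemma pd_differentiable {f : V4 → ℝ} (hf : ContDiff ℝ (⊤ : ℕ∞) f) (a : V4) :
    Differentiable ℝ (pd a f) := (pd_contDiff hf a).differentiable (by simp)

attribute [fun_prop] pd_contDiff

lemma pd_comm {f : V4 → ℝ} (hf : ContDiff ℝ (⊤ : ℕ∞) f) (a b : V4) : pd a (pd b f) = pd b (pd a f) := by
  funext P
  have hdf : Differentiable ℝ f := hf.differentiable (by simp)
  have h2 : DifferentiableAt ℝ (fderiv ℝ f) P :=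
    ((hf.fderiv_right (m := (⊤ : ℕ∞)) (le_refl _)).differentiable (by simp)) P
  have hsymm := second_derivative_symmetric (fun x => (hdf x).hasFDerivAt) h2.hasFDerivAt a b
  have key : ∀ c d : V4, pd c (pd d f) P = fderiv ℝ (fderiv ℝ f) P c d := by
    intro c d
    have h3 : HasFDerivAt (fun Q => fderiv ℝ f Q d)
        ((ContinuousLinearMap.apply ℝ ℝ d).comp (fderiv ℝ (fderiv ℝ f) P)) P :=
      (ContinuousLinearMap.apply ℝ ℝ d).hasFDerivAt.comp P h2.hasFDerivAt
    show fderiv ℝ (fun Q => fderiv ℝ f Q d) P c = _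
    rw [h3.fderiv]; rfl
  rw [key, key, hsymm]

lemma pd_add {f g : V4 → ℝ} {P : V4} (hf : DifferentiableAt ℝ f P)
    (hg : DifferentiableAt ℝ g P) (a : V4) :
    pd a (fun Q => f Q + g Q) P = pd a f P + pd a g P := by
  simp [pd, fderiv_fun_add hf hg]

lemma pd_sub {f g : V4 → ℝ} {P : V4} (hf : DifferentiableAt ℝ f P)
    (hg : DifferentiableAt ℝ g P) (a : V4) :
    pd a (fun Q => f Q - g Q) P = pd a f P - pd a g P := by
  simp [pd, fderiv_fun_sub hf hg]

lemma pd_mul {f g : V4 → ℝ} {P : V4} (hf : DifferentiableAt ℝ f P)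
    (hg : DifferentiableAt ℝ g P) (a : V4) :
    pd a (fun Q => f Q * g Q) P = pd a f P * g P + f P * pd a g P := by
  simp [pd, fderiv_fun_mul hf hg]; ring

lemma pd_const_mul {f : V4 → ℝ} {P : V4} (hf : DifferentiableAt ℝ f P) (c : ℝ) (a : V4) :
    pd a (fun Q => c * f Q) P = c * pd a f P := by
  simp [pd, fderiv_const_mul hf c]

lemma pd_const (c : ℝ) (a P : V4) : pd a (fun _ : V4 => c) P = 0 := by
  simp [pd]

def et : V4 := (1, 0, 0, 0)
def ex : V4 := (0, 1, 0, 0)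
def ey : V4 := (0, 0, 1, 0)
def ez : V4 := (0, 0, 0, 1)

lemma et_x : et.2.1 = 0 := rfl
lemma et_y : et.2.2.1 = 0 := rfl
lemma ex_x : ex.2.1 = 1 := rfl
lemma ex_y : ex.2.2.1 = 0 := rfl
lemma ey_x : ey.2.1 = 0 := rfl
lemma ey_y : ey.2.2.1 = 1 := rfl
lemma ez_x : ez.2.1 = 0 := rfl
lemma ez_y : ez.2.2.1 = 0 := rfl

lemma pd_coord_x (a P : V4) : pd a (fun Q : V4 => Q.2.1) P = a.2.1 := by
  have h : HasFDerivAt (fun Q : V4 => Q.2.1)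
      ((ContinuousLinearMap.fst ℝ ℝ (ℝ × ℝ)).comp (ContinuousLinearMap.snd ℝ ℝ (ℝ × ℝ × ℝ))) P :=
    ((ContinuousLinearMap.fst ℝ ℝ (ℝ × ℝ)).comp
      (ContinuousLinearMap.snd ℝ ℝ (ℝ × ℝ × ℝ))).hasFDerivAt
  simp [pd, h.fderiv]

lemma pd_coord_y (a P : V4) : pd a (fun Q : V4 => Q.2.2.1) P = a.2.2.1 := by
  have h : HasFDerivAt (fun Q : V4 => Q.2.2.1)
      ((ContinuousLinearMap.fst ℝ ℝ ℝ).comp ((ContinuousLinearMap.snd ℝ ℝ (ℝ × ℝ)).comp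
        (ContinuousLinearMap.snd ℝ ℝ (ℝ × ℝ × ℝ)))) P :=
    ((ContinuousLinearMap.fst ℝ ℝ ℝ).comp ((ContinuousLinearMap.snd ℝ ℝ (ℝ × ℝ)).comp
        (ContinuousLinearMap.snd ℝ ℝ (ℝ × ℝ × ℝ)))).hasFDerivAt
  simp [pd, h.fderiv]

lemma pt_eq {f : V4 → ℝ} {P : V4} (hf : DifferentiableAt ℝ f P) : pt f P = pd et f P := by
  have hg : HasDerivAt (fun w : ℝ => ((w, P.2.1, P.2.2.1, P.2.2.2) : V4)) et P.1 :=
    HasDerivAt.prodMk (hasDerivAt_id P.1) (hasDerivAt_const P.1 (P.2.1, P.2.2.1, P.2.2.2))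
  have h := hf.hasFDerivAt.comp_hasDerivAt P.1 hg
  simpa [pt, pd, Function.comp_def] using h.deriv

lemma px_eq {f : V4 → ℝ} {P : V4} (hf : DifferentiableAt ℝ f P) : px f P = pd ex f P := by
  have hg : HasDerivAt (fun w : ℝ => ((P.1, w, P.2.2.1, P.2.2.2) : V4)) ex P.2.1 :=
    HasDerivAt.prodMk (hasDerivAt_const P.2.1 P.1)
      (HasDerivAt.prodMk (hasDerivAt_id P.2.1) (hasDerivAt_const P.2.1 (P.2.2.1, P.2.2.2)))
  have h := hf.hasFDerivAt.comp_hasDerivAt P.2.1 hg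
  simpa [px, pd, Function.comp_def] using h.deriv

lemma py_eq {f : V4 → ℝ} {P : V4} (hf : DifferentiableAt ℝ f P) : py f P = pd ey f P := by
  have hg : HasDerivAt (fun w : ℝ => ((P.1, P.2.1, w, P.2.2.2) : V4)) ey P.2.2.1 :=
    HasDerivAt.prodMk (hasDerivAt_const P.2.2.1 P.1)
      (HasDerivAt.prodMk (hasDerivAt_const P.2.2.1 P.2.1)
        (HasDerivAt.prodMk (hasDerivAt_id P.2.2.1) (hasDerivAt_const P.2.2.1 P.2.2.2)))
  have h := hf.hasFDerivAt.comp_hasDerivAt P.2.2.1 hg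
  simpa [py, pd, Function.comp_def] using h.deriv

lemma pz_eq {f : V4 → ℝ} {P : V4} (hf : DifferentiableAt ℝ f P) : pz f P = pd ez f P := by
  have hg : HasDerivAt (fun w : ℝ => ((P.1, P.2.1, P.2.2.1, w) : V4)) ez P.2.2.2 :=
    HasDerivAt.prodMk (hasDerivAt_const P.2.2.2 P.1)
      (HasDerivAt.prodMk (hasDerivAt_const P.2.2.2 P.2.1)
        (HasDerivAt.prodMk (hasDerivAt_const P.2.2.2 P.2.2.1) (hasDerivAt_id P.2.2.2)))
  have h := hf.hasFDerivAt.comp_hasDerivAt P.2.2.2 hg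
  simpa [pz, pd, Function.comp_def] using h.deriv

theorem rmhd_first_covering_compatibility
    (u v s : ℝ × ℝ × ℝ × ℝ → ℝ) (l : ℝ)
    (hu : ContDiff ℝ (⊤ : ℕ∞) u) (hv : ContDiff ℝ (⊤ : ℕ∞) v) (hs : ContDiff ℝ (⊤ : ℕ∞) s)
    (hst : ∀ P, pt s P = J u s P + lap v P + l * Eop u P)
    (hsz : ∀ P, pz s P = J v s P + lap u P + l * Eop v P) :
    ∀ P, F1 u v P + J (F2 u v) s P + l * Eop (F2 u v) P = 0 := by
  have hdu : Differentiable ℝ u := hu.differentiable (by simp)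
  have hdv : Differentiable ℝ v := hv.differentiable (by simp)
  have hds : Differentiable ℝ s := hs.differentiable (by simp)
  have cxu : px u = pd ex u := funext fun Q => px_eq (hdu Q)
  have cyu : py u = pd ey u := funext fun Q => py_eq (hdu Q)
  have czu : pz u = pd ez u := funext fun Q => pz_eq (hdu Q)
  have cxv : px v = pd ex v := funext fun Q => px_eq (hdv Q)
  have cyv : py v = pd ey v := funext fun Q => py_eq (hdv Q)
  have ctv : pt v = pd et v := funext fun Q => pt_eq (hdv Q)
  have cxs : px s = pd ex s := funext fun Q => px_eq (hds Q)
  have cys : py s = pd ey s := funext fun Q => py_eq (hds Q)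
  have cLu : lap u = fun Q => pd ex (pd ex u) Q + pd ey (pd ey u) Q := by
    funext Q
    simp only [lap, cxu, cyu]
    simp (disch := fun_prop) only [px_eq, py_eq]
  have cLv : lap v = fun Q => pd ex (pd ex v) Q + pd ey (pd ey v) Q := by
    funext Q
    simp only [lap, cxv, cyv]
    simp (disch := fun_prop) only [px_eq, py_eq]
  have cF2 : F2 u v = fun Q => pd et v Q - pd ez u Q - (pd ex u Q * pd ey v Q - pd ey u Q * pd ex v Q) := by
    funext Q
    simp only [F2, J, cxu, cyu, czu, ctv, cxv, cyv]
  have hA : pd et s = (fun Q => pd ex u Q * pd ey s Q - pd ey u Q * pd ex s Q + (pd ex (pd ex v) Q + pd ey (pd ey v) Q) + l * (Q.2.1 * pd ex u Q + Q.2.2.1 * pd ey u Q - 2 * u Q)) := by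
    funext Q
    have h := hst Q
    simp only [J, lap, Eop] at h
    simp only [cxu, cyu, cxv, cyv, cxs, cys] at h
    simp (disch := fun_prop) only [pt_eq, px_eq, py_eq, pz_eq] at h
    exact h
  have hB : pd ez s = (fun Q => pd ex v Q * pd ey s Q - pd ey v Q * pd ex s Q + (pd ex (pd ex u) Q + pd ey (pd ey u) Q) + l * (Q.2.1 * pd ex v Q + Q.2.2.1 * pd ey v Q - 2 * v Q)) := by
    funext Q
    have h := hsz Q
    simp only [J, lap, Eop] at h
    simp only [cxu, cyu, cxv, cyv, cxs, cys] at h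
    simp (disch := fun_prop) only [pt_eq, px_eq, py_eq, pz_eq] at h
    exact h
  intro P
  have hE : pd ez (pd et s) P = pd et (pd ez s) P := congrFun (pd_comm hs ez et) P
  rw [hA, hB] at hE
  simp (disch := fun_prop) only [pd_add, pd_sub, pd_mul, pd_const_mul, pd_const,
    pd_coord_x, pd_coord_y] at hE
  rw [pd_comm hs ez ex, pd_comm hs ez ey, pd_comm hs et ex, pd_comm hs et ey] at hE
  rw [hA, hB] at hE
  simp (disch := fun_prop) only [pd_add, pd_sub, pd_mul, pd_const_mul, pd_const,
    pd_coord_x, pd_coord_y] at hE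
  simp only [et_x, et_y, ex_x, ex_y, ey_x, ey_y, ez_x, ez_y] at hE
  simp only [F1, J, Eop]
  simp only [cLu, cLv, cF2, cxu, cyu, czu, cxv, cyv, ctv, cxs, cys]
  simp (disch := fun_prop) only [pt_eq, px_eq, py_eq, pz_eq]
  simp (disch := fun_prop) only [pd_add, pd_sub, pd_mul, pd_const_mul, pd_const,
    pd_coord_x, pd_coord_y]
  have nrm1 : pd ex (pd et (u)) = pd et (pd ex (u)) := pd_comm (hu) ex et
  have nrm2 : pd ey (pd et (u)) = pd et (pd ey (u)) := pd_comm (hu) ey et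
  have nrm3 : pd ez (pd et (u)) = pd et (pd ez (u)) := pd_comm (hu) ez et
  have nrm4 : pd ey (pd ex (u)) = pd ex (pd ey (u)) := pd_comm (hu) ey ex
  have nrm5 : pd ez (pd ex (u)) = pd ex (pd ez (u)) := pd_comm (hu) ez ex
  have nrm6 : pd ez (pd ey (u)) = pd ey (pd ez (u)) := pd_comm (hu) ez ey
  have nrm7 : pd ex (pd et (v)) = pd et (pd ex (v)) := pd_comm (hv) ex et
  have nrm8 : pd ey (pd et (v)) = pd et (pd ey (v)) := pd_comm (hv) ey et
  have nrm9 : pd ez (pd et (v)) = pd et (pd ez (v)) := pd_comm (hv) ez et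
  have nrm10 : pd ey (pd ex (v)) = pd ex (pd ey (v)) := pd_comm (hv) ey ex
  have nrm11 : pd ez (pd ex (v)) = pd ex (pd ez (v)) := pd_comm (hv) ez ex
  have nrm12 : pd ez (pd ey (v)) = pd ey (pd ez (v)) := pd_comm (hv) ez ey
  have nrm13 : pd ex (pd et (s)) = pd et (pd ex (s)) := pd_comm (hs) ex et
  have nrm14 : pd ey (pd et (s)) = pd et (pd ey (s)) := pd_comm (hs) ey et
  have nrm15 : pd ez (pd et (s)) = pd et (pd ez (s)) := pd_comm (hs) ez et
  have nrm16 : pd ey (pd ex (s)) = pd ex (pd ey (s)) := pd_comm (hs) ey ex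
  have nrm17 : pd ez (pd ex (s)) = pd ex (pd ez (s)) := pd_comm (hs) ez ex
  have nrm18 : pd ez (pd ey (s)) = pd ey (pd ez (s)) := pd_comm (hs) ez ey
  have nrm19 : pd ex (pd et (pd et u)) = pd et (pd ex (pd et u)) := pd_comm (pd_contDiff hu et) ex et
  have nrm20 : pd ey (pd et (pd et u)) = pd et (pd ey (pd et u)) := pd_comm (pd_contDiff hu et) ey et
  have nrm21 : pd ez (pd et (pd et u)) = pd et (pd ez (pd et u)) := pd_comm (pd_contDiff hu et) ez et
  have nrm22 : pd ey (pd ex (pd et u)) = pd ex (pd ey (pd et u)) := pd_comm (pd_contDiff hu et) ey ex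
  have nrm23 : pd ez (pd ex (pd et u)) = pd ex (pd ez (pd et u)) := pd_comm (pd_contDiff hu et) ez ex
  have nrm24 : pd ez (pd ey (pd et u)) = pd ey (pd ez (pd et u)) := pd_comm (pd_contDiff hu et) ez ey
  have nrm25 : pd ex (pd et (pd ex u)) = pd et (pd ex (pd ex u)) := pd_comm (pd_contDiff hu ex) ex et
  have nrm26 : pd ey (pd et (pd ex u)) = pd et (pd ey (pd ex u)) := pd_comm (pd_contDiff hu ex) ey et
  have nrm27 : pd ez (pd et (pd ex u)) = pd et (pd ez (pd ex u)) := pd_comm (pd_contDiff hu ex) ez et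
  have nrm28 : pd ey (pd ex (pd ex u)) = pd ex (pd ey (pd ex u)) := pd_comm (pd_contDiff hu ex) ey ex
  have nrm29 : pd ez (pd ex (pd ex u)) = pd ex (pd ez (pd ex u)) := pd_comm (pd_contDiff hu ex) ez ex
  have nrm30 : pd ez (pd ey (pd ex u)) = pd ey (pd ez (pd ex u)) := pd_comm (pd_contDiff hu ex) ez ey
  have nrm31 : pd ex (pd et (pd ey u)) = pd et (pd ex (pd ey u)) := pd_comm (pd_contDiff hu ey) ex et
  have nrm32 : pd ey (pd et (pd ey u)) = pd et (pd ey (pd ey u)) := pd_comm (pd_contDiff hu ey) ey et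
  have nrm33 : pd ez (pd et (pd ey u)) = pd et (pd ez (pd ey u)) := pd_comm (pd_contDiff hu ey) ez et
  have nrm34 : pd ey (pd ex (pd ey u)) = pd ex (pd ey (pd ey u)) := pd_comm (pd_contDiff hu ey) ey ex
  have nrm35 : pd ez (pd ex (pd ey u)) = pd ex (pd ez (pd ey u)) := pd_comm (pd_contDiff hu ey) ez ex
  have nrm36 : pd ez (pd ey (pd ey u)) = pd ey (pd ez (pd ey u)) := pd_comm (pd_contDiff hu ey) ez ey
  have nrm37 : pd ex (pd et (pd ez u)) = pd et (pd ex (pd ez u)) := pd_comm (pd_contDiff hu ez) ex et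
  have nrm38 : pd ey (pd et (pd ez u)) = pd et (pd ey (pd ez u)) := pd_comm (pd_contDiff hu ez) ey et
  have nrm39 : pd ez (pd et (pd ez u)) = pd et (pd ez (pd ez u)) := pd_comm (pd_contDiff hu ez) ez et
  have nrm40 : pd ey (pd ex (pd ez u)) = pd ex (pd ey (pd ez u)) := pd_comm (pd_contDiff hu ez) ey ex
  have nrm41 : pd ez (pd ex (pd ez u)) = pd ex (pd ez (pd ez u)) := pd_comm (pd_contDiff hu ez) ez ex
  have nrm42 : pd ez (pd ey (pd ez u)) = pd ey (pd ez (pd ez u)) := pd_comm (pd_contDiff hu ez) ez ey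
  have nrm43 : pd ex (pd et (pd et v)) = pd et (pd ex (pd et v)) := pd_comm (pd_contDiff hv et) ex et
  have nrm44 : pd ey (pd et (pd et v)) = pd et (pd ey (pd et v)) := pd_comm (pd_contDiff hv et) ey et
  have nrm45 : pd ez (pd et (pd et v)) = pd et (pd ez (pd et v)) := pd_comm (pd_contDiff hv et) ez et
  have nrm46 : pd ey (pd ex (pd et v)) = pd ex (pd ey (pd et v)) := pd_comm (pd_contDiff hv et) ey ex
  have nrm47 : pd ez (pd ex (pd et v)) = pd ex (pd ez (pd et v)) := pd_comm (pd_contDiff hv et) ez ex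
  have nrm48 : pd ez (pd ey (pd et v)) = pd ey (pd ez (pd et v)) := pd_comm (pd_contDiff hv et) ez ey
  have nrm49 : pd ex (pd et (pd ex v)) = pd et (pd ex (pd ex v)) := pd_comm (pd_contDiff hv ex) ex et
  have nrm50 : pd ey (pd et (pd ex v)) = pd et (pd ey (pd ex v)) := pd_comm (pd_contDiff hv ex) ey et
  have nrm51 : pd ez (pd et (pd ex v)) = pd et (pd ez (pd ex v)) := pd_comm (pd_contDiff hv ex) ez et
  have nrm52 : pd ey (pd ex (pd ex v)) = pd ex (pd ey (pd ex v)) := pd_comm (pd_contDiff hv ex) ey ex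
  have nrm53 : pd ez (pd ex (pd ex v)) = pd ex (pd ez (pd ex v)) := pd_comm (pd_contDiff hv ex) ez ex
  have nrm54 : pd ez (pd ey (pd ex v)) = pd ey (pd ez (pd ex v)) := pd_comm (pd_contDiff hv ex) ez ey
  have nrm55 : pd ex (pd et (pd ey v)) = pd et (pd ex (pd ey v)) := pd_comm (pd_contDiff hv ey) ex et
  have nrm56 : pd ey (pd et (pd ey v)) = pd et (pd ey (pd ey v)) := pd_comm (pd_contDiff hv ey) ey et
  have nrm57 : pd ez (pd et (pd ey v)) = pd et (pd ez (pd ey v)) := pd_comm (pd_contDiff hv ey) ez et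
  have nrm58 : pd ey (pd ex (pd ey v)) = pd ex (pd ey (pd ey v)) := pd_comm (pd_contDiff hv ey) ey ex
  have nrm59 : pd ez (pd ex (pd ey v)) = pd ex (pd ez (pd ey v)) := pd_comm (pd_contDiff hv ey) ez ex
  have nrm60 : pd ez (pd ey (pd ey v)) = pd ey (pd ez (pd ey v)) := pd_comm (pd_contDiff hv ey) ez ey
  have nrm61 : pd ex (pd et (pd ez v)) = pd et (pd ex (pd ez v)) := pd_comm (pd_contDiff hv ez) ex et
  have nrm62 : pd ey (pd et (pd ez v)) = pd et (pd ey (pd ez v)) := pd_comm (pd_contDiff hv ez) ey et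
  have nrm63 : pd ez (pd et (pd ez v)) = pd et (pd ez (pd ez v)) := pd_comm (pd_contDiff hv ez) ez et
  have nrm64 : pd ey (pd ex (pd ez v)) = pd ex (pd ey (pd ez v)) := pd_comm (pd_contDiff hv ez) ey ex
  have nrm65 : pd ez (pd ex (pd ez v)) = pd ex (pd ez (pd ez v)) := pd_comm (pd_contDiff hv ez) ez ex
  have nrm66 : pd ez (pd ey (pd ez v)) = pd ey (pd ez (pd ez v)) := pd_comm (pd_contDiff hv ez) ez ey
  simp only [nrm1, nrm2, nrm3, nrm4, nrm5, nrm6, nrm7, nrm8, nrm9, nrm10, nrm11, nrm12, nrm13, nrm14, nrm15, nrm16, nrm17, nrm18, nrm19, nrm20, nrm21, nrm22, nrm23, nrm24, nrm25, nrm26, nrm27, nrm28, nrm29, nrm30, nrm31, nrm32, nrm33, nrm34, nrm35, nrm36, nrm37, nrm38, nrm39, nrm40, nrm41, nrm42, nrm43, nrm44, nrm45, nrm46, nrm47, nrm48, nrm49, nrm50, nrm51, nrm52, nrm53, nrm54, nrm55, nrm56, nrm57, nrm58, nrm59, nrm60, nrm61, nrm62, nrm63, nrm64, nrm65, nrm66]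 at hE ⊢
  norm_num at hE ⊢
  linear_combination -hE
end
end

section
/- Let u, v : ℝ⁴ → ℝ be a smooth solution of RMHD (F1 = 0 and F2 = 0 everywhere), and let ψ₁, ψ₂ : ℝ⁴ → ℝ be smooth functions satisfying the cotangent system: Δ(ψ₁,t − J(u, ψ₁)) − ψ₂,z + J(v, ψ₂) + J(Δu, ψ₁) = 0 and Δ(ψ₁,z − J(v, ψ₁)) − ψ₂,t + J(u, ψ₂) + J(Δv, ψ₁) = 0 at every point. Then the pair φ₁ := ψ₁,t − J(u, ψ₁), φ₂ := ψ₁,z − J(v, ψ₁) satisfies the linearized (tangent) system of RMHD: (Δφ₁)_t − (Δφ₂)_z − J(φ₁, Δu) − J(u, Δφ₁) + J(φ₂, Δv) + J(v, Δφ₂) = 0 and φ₂,t − φ₁,z − J(φ₁, v) − J(u, φ₂) = 0 at every point. -/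
noncomputable section

abbrev E4 := ℝ × ℝ × ℝ × ℝ

def D (f : E4 → ℝ) (e : E4) : E4 → ℝ := fun P => fderiv ℝ f P e

lemma hasDerivAt_ct (P : E4) (w : ℝ) :
    HasDerivAt (fun w : ℝ => ((w, P.2.1, P.2.2.1, P.2.2.2) : E4)) (1, 0, 0, 0) w :=
  HasDerivAt.prodMk (hasDerivAt_id w) (hasDerivAt_const w _)

lemma hasDerivAt_cx (P : E4) (w : ℝ) :
    HasDerivAt (fun w : ℝ => ((P.1, w, P.2.2.1, P.2.2.2) : E4)) (0, 1, 0, 0) w :=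
  HasDerivAt.prodMk (hasDerivAt_const w _) (HasDerivAt.prodMk (hasDerivAt_id w) (hasDerivAt_const w _))

lemma hasDerivAt_cy (P : E4) (w : ℝ) :
    HasDerivAt (fun w : ℝ => ((P.1, P.2.1, w, P.2.2.2) : E4)) (0, 0, 1, 0) w :=
  HasDerivAt.prodMk (hasDerivAt_const w _) (HasDerivAt.prodMk (hasDerivAt_const w _) (HasDerivAt.prodMk (hasDerivAt_id w) (hasDerivAt_const w _)))

lemma hasDerivAt_cz (P : E4) (w : ℝ) :
    HasDerivAt (fun w : ℝ => ((P.1, P.2.1, P.2.2.1, w) : E4)) (0, 0, 0, 1) w :=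
  HasDerivAt.prodMk (hasDerivAt_const w _) (HasDerivAt.prodMk (hasDerivAt_const w _) (HasDerivAt.prodMk (hasDerivAt_const w _) (hasDerivAt_id w)))

lemma pt_eq_s5 {f : E4 → ℝ} (hf : Differentiable ℝ f) (P : E4) : pt f P = D f (1,0,0,0) P :=
  ((hf P).hasFDerivAt.comp_hasDerivAt P.1 (hasDerivAt_ct P P.1)).deriv

lemma px_eq_s5 {f : E4 → ℝ} (hf : Differentiable ℝ f) (P : E4) : px f P = D f (0,1,0,0) P :=
  ((hf P).hasFDerivAt.comp_hasDerivAt P.2.1 (hasDerivAt_cx P P.2.1)).deriv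

lemma py_eq_s5 {f : E4 → ℝ} (hf : Differentiable ℝ f) (P : E4) : py f P = D f (0,0,1,0) P :=
  ((hf P).hasFDerivAt.comp_hasDerivAt P.2.2.1 (hasDerivAt_cy P P.2.2.1)).deriv

lemma pz_eq_s5 {f : E4 → ℝ} (hf : Differentiable ℝ f) (P : E4) : pz f P = D f (0,0,0,1) P :=
  ((hf P).hasFDerivAt.comp_hasDerivAt P.2.2.2 (hasDerivAt_cz P P.2.2.2)).deriv

lemma ptD {f : E4 → ℝ} (hf : Differentiable ℝ f) : pt f = D f (1,0,0,0) := funext (pt_eq_s5 hf)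
lemma pxD {f : E4 → ℝ} (hf : Differentiable ℝ f) : px f = D f (0,1,0,0) := funext (px_eq_s5 hf)
lemma pyD {f : E4 → ℝ} (hf : Differentiable ℝ f) : py f = D f (0,0,1,0) := funext (py_eq_s5 hf)
lemma pzD {f : E4 → ℝ} (hf : Differentiable ℝ f) : pz f = D f (0,0,0,1) := funext (pz_eq_s5 hf)

lemma D_smooth {f : E4 → ℝ} (hf : ContDiff ℝ (⊤ : ℕ∞) f) (e : E4) : ContDiff ℝ (⊤ : ℕ∞) (D f e) :=
  (hf.fderiv_right (by simp)).clm_apply contDiff_const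

lemma D_comm {f : E4 → ℝ} (hf : ContDiff ℝ (⊤ : ℕ∞) f) (a b : E4) : D (D f a) b = D (D f b) a := by
  funext P
  have h1 : ∀ Q, HasFDerivAt f (fderiv ℝ f Q) Q :=
    fun Q => (hf.differentiable (by simp) Q).hasFDerivAt
  have h2 : HasFDerivAt (fderiv ℝ f) (fderiv ℝ (fderiv ℝ f) P) P :=
    ((hf.fderiv_right (m := (⊤ : ℕ∞)) (by simp)).differentiable (by simp) P).hasFDerivAt
  have key := second_derivative_symmetric h1 h2 a b
  have ha : HasFDerivAt (D f a) ((ContinuousLinearMap.apply ℝ ℝ a).comp (fderiv ℝ (fderiv ℝ f) P)) P :=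
    ((ContinuousLinearMap.apply ℝ ℝ a).hasFDerivAt).comp P h2
  have hb : HasFDerivAt (D f b) ((ContinuousLinearMap.apply ℝ ℝ b).comp (fderiv ℝ (fderiv ℝ f) P)) P :=
    ((ContinuousLinearMap.apply ℝ ℝ b).hasFDerivAt).comp P h2
  show fderiv ℝ (D f a) P b = fderiv ℝ (D f b) P a
  rw [ha.fderiv, hb.fderiv]
  simpa using key.symm

lemma pt_smooth {f : E4 → ℝ} (hf : ContDiff ℝ (⊤ : ℕ∞) f) : ContDiff ℝ (⊤ : ℕ∞) (pt f) := by
  rw [ptD (hf.differentiable (by simp))]; exact D_smooth hf _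
lemma px_smooth {f : E4 → ℝ} (hf : ContDiff ℝ (⊤ : ℕ∞) f) : ContDiff ℝ (⊤ : ℕ∞) (px f) := by
  rw [pxD (hf.differentiable (by simp))]; exact D_smooth hf _
lemma py_smooth {f : E4 → ℝ} (hf : ContDiff ℝ (⊤ : ℕ∞) f) : ContDiff ℝ (⊤ : ℕ∞) (py f) := by
  rw [pyD (hf.differentiable (by simp))]; exact D_smooth hf _
lemma pz_smooth {f : E4 → ℝ} (hf : ContDiff ℝ (⊤ : ℕ∞) f) : ContDiff ℝ (⊤ : ℕ∞) (pz f) := by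
  rw [pzD (hf.differentiable (by simp))]; exact D_smooth hf _

lemma comm_gen {f : E4 → ℝ} (hf : ContDiff ℝ (⊤ : ℕ∞) f)
    (p q : (E4 → ℝ) → E4 → ℝ) (a b : E4)
    (hp : ∀ g : E4 → ℝ, Differentiable ℝ g → p g = D g a)
    (hq : ∀ g : E4 → ℝ, Differentiable ℝ g → q g = D g b) :
    p (q f) = q (p f) := by
  have h1 := hf.differentiable (by simp)
  rw [hq f h1, hp f h1, hp _ ((D_smooth hf b).differentiable (by simp)),
    hq _ ((D_smooth hf a).differentiable (by simp)), D_comm hf]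

lemma pt_px_comm {f : E4 → ℝ} (hf : ContDiff ℝ (⊤ : ℕ∞) f) : pt (px f) = px (pt f) :=
  comm_gen hf pt px _ _ (fun _ h => ptD h) (fun _ h => pxD h)
lemma pt_py_comm {f : E4 → ℝ} (hf : ContDiff ℝ (⊤ : ℕ∞) f) : pt (py f) = py (pt f) :=
  comm_gen hf pt py _ _ (fun _ h => ptD h) (fun _ h => pyD h)
lemma pt_pz_comm {f : E4 → ℝ} (hf : ContDiff ℝ (⊤ : ℕ∞) f) : pt (pz f) = pz (pt f) :=
  comm_gen hf pt pz _ _ (fun _ h => ptD h) (fun _ h => pzD h)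
lemma pz_px_comm {f : E4 → ℝ} (hf : ContDiff ℝ (⊤ : ℕ∞) f) : pz (px f) = px (pz f) :=
  comm_gen hf pz px _ _ (fun _ h => pzD h) (fun _ h => pxD h)
lemma pz_py_comm {f : E4 → ℝ} (hf : ContDiff ℝ (⊤ : ℕ∞) f) : pz (py f) = py (pz f) :=
  comm_gen hf pz py _ _ (fun _ h => pzD h) (fun _ h => pyD h)
lemma py_px_comm {f : E4 → ℝ} (hf : ContDiff ℝ (⊤ : ℕ∞) f) : py (px f) = px (py f) :=
  comm_gen hf py px _ _ (fun _ h => pyD h) (fun _ h => pxD h)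
lemma pt_diffAt {f : E4 → ℝ} (hf : Differentiable ℝ f) (P : E4) :
    DifferentiableAt ℝ (fun w => f (w, P.2.1, P.2.2.1, P.2.2.2)) P.1 :=
  ((hf (((P.1, P.2.1, P.2.2.1, P.2.2.2)) : E4)).hasFDerivAt.comp_hasDerivAt P.1 (hasDerivAt_ct P P.1)).differentiableAt

lemma pt_sub {f g : E4 → ℝ} (hf : Differentiable ℝ f) (hg : Differentiable ℝ g) (P : E4) :
    pt (fun Q => f Q - g Q) P = pt f P - pt g P := by
  simp only [pt]
  exact deriv_sub (pt_diffAt hf P) (pt_diffAt hg P)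

lemma pt_add {f g : E4 → ℝ} (hf : Differentiable ℝ f) (hg : Differentiable ℝ g) (P : E4) :
    pt (fun Q => f Q + g Q) P = pt f P + pt g P := by
  simp only [pt]
  exact deriv_add (pt_diffAt hf P) (pt_diffAt hg P)

lemma pt_mul {f g : E4 → ℝ} (hf : Differentiable ℝ f) (hg : Differentiable ℝ g) (P : E4) :
    pt (fun Q => f Q * g Q) P = pt f P * g P + f P * pt g P := by
  simp only [pt]
  exact deriv_mul (pt_diffAt hf P) (pt_diffAt hg P)

lemma px_diffAt {f : E4 → ℝ} (hf : Differentiable ℝ f) (P : E4) :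
    DifferentiableAt ℝ (fun w => f (P.1, w, P.2.2.1, P.2.2.2)) P.2.1 :=
  ((hf (((P.1, P.2.1, P.2.2.1, P.2.2.2)) : E4)).hasFDerivAt.comp_hasDerivAt P.2.1 (hasDerivAt_cx P P.2.1)).differentiableAt

lemma px_sub {f g : E4 → ℝ} (hf : Differentiable ℝ f) (hg : Differentiable ℝ g) (P : E4) :
    px (fun Q => f Q - g Q) P = px f P - px g P := by
  simp only [px]
  exact deriv_sub (px_diffAt hf P) (px_diffAt hg P)

lemma px_add {f g : E4 → ℝ} (hf : Differentiable ℝ f) (hg : Differentiable ℝ g) (P : E4) :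
    px (fun Q => f Q + g Q) P = px f P + px g P := by
  simp only [px]
  exact deriv_add (px_diffAt hf P) (px_diffAt hg P)

lemma px_mul {f g : E4 → ℝ} (hf : Differentiable ℝ f) (hg : Differentiable ℝ g) (P : E4) :
    px (fun Q => f Q * g Q) P = px f P * g P + f P * px g P := by
  simp only [px]
  exact deriv_mul (px_diffAt hf P) (px_diffAt hg P)

lemma py_diffAt {f : E4 → ℝ} (hf : Differentiable ℝ f) (P : E4) :
    DifferentiableAt ℝ (fun w => f (P.1, P.2.1, w, P.2.2.2)) P.2.2.1 :=
  ((hf (((P.1, P.2.1, P.2.2.1, P.2.2.2)) : E4)).hasFDerivAt.comp_hasDerivAt P.2.2.1 (hasDerivAt_cy P P.2.2.1)).differentiableAt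

lemma py_sub {f g : E4 → ℝ} (hf : Differentiable ℝ f) (hg : Differentiable ℝ g) (P : E4) :
    py (fun Q => f Q - g Q) P = py f P - py g P := by
  simp only [py]
  exact deriv_sub (py_diffAt hf P) (py_diffAt hg P)

lemma py_add {f g : E4 → ℝ} (hf : Differentiable ℝ f) (hg : Differentiable ℝ g) (P : E4) :
    py (fun Q => f Q + g Q) P = py f P + py g P := by
  simp only [py]
  exact deriv_add (py_diffAt hf P) (py_diffAt hg P)

lemma py_mul {f g : E4 → ℝ} (hf : Differentiable ℝ f) (hg : Differentiable ℝ g) (P : E4) :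
    py (fun Q => f Q * g Q) P = py f P * g P + f P * py g P := by
  simp only [py]
  exact deriv_mul (py_diffAt hf P) (py_diffAt hg P)

lemma pz_diffAt {f : E4 → ℝ} (hf : Differentiable ℝ f) (P : E4) :
    DifferentiableAt ℝ (fun w => f (P.1, P.2.1, P.2.2.1, w)) P.2.2.2 :=
  ((hf (((P.1, P.2.1, P.2.2.1, P.2.2.2)) : E4)).hasFDerivAt.comp_hasDerivAt P.2.2.2 (hasDerivAt_cz P P.2.2.2)).differentiableAt

lemma pz_sub {f g : E4 → ℝ} (hf : Differentiable ℝ f) (hg : Differentiable ℝ g) (P : E4) :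
    pz (fun Q => f Q - g Q) P = pz f P - pz g P := by
  simp only [pz]
  exact deriv_sub (pz_diffAt hf P) (pz_diffAt hg P)

lemma pz_add {f g : E4 → ℝ} (hf : Differentiable ℝ f) (hg : Differentiable ℝ g) (P : E4) :
    pz (fun Q => f Q + g Q) P = pz f P + pz g P := by
  simp only [pz]
  exact deriv_add (pz_diffAt hf P) (pz_diffAt hg P)

lemma pz_mul {f g : E4 → ℝ} (hf : Differentiable ℝ f) (hg : Differentiable ℝ g) (P : E4) :
    pz (fun Q => f Q * g Q) P = pz f P * g P + f P * pz g P := by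
  simp only [pz]
  exact deriv_mul (pz_diffAt hf P) (pz_diffAt hg P)


lemma J_smooth {f g : E4 → ℝ} (hf : ContDiff ℝ (⊤ : ℕ∞) f) (hg : ContDiff ℝ (⊤ : ℕ∞) g) :
    ContDiff ℝ (⊤ : ℕ∞) (J f g) :=
  ((px_smooth hf).mul (py_smooth hg)).sub ((py_smooth hf).mul (px_smooth hg))

lemma lap_smooth {f : E4 → ℝ} (hf : ContDiff ℝ (⊤ : ℕ∞) f) : ContDiff ℝ (⊤ : ℕ∞) (lap f) :=
  (px_smooth (px_smooth hf)).add (py_smooth (py_smooth hf))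

lemma J_apply (f g : E4 → ℝ) (P : E4) : J f g P = px f P * py g P - py f P * px g P := rfl

lemma J_antisym (f g : E4 → ℝ) (P : E4) : J f g P = - J g f P := by
  simp only [J]; ring

lemma pt_J {f g : E4 → ℝ} (hf : ContDiff ℝ (⊤ : ℕ∞) f) (hg : ContDiff ℝ (⊤ : ℕ∞) g) (P : E4) :
    pt (J f g) P = J (pt f) g P + J f (pt g) P := by
  have h1 : Differentiable ℝ (fun Q => px f Q * py g Q) :=
    ((px_smooth hf).mul (py_smooth hg)).differentiable (by simp)
  have h2 : Differentiable ℝ (fun Q => py f Q * px g Q) :=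
    ((py_smooth hf).mul (px_smooth hg)).differentiable (by simp)
  have e0 : pt (J f g) P = pt (fun Q => px f Q * py g Q) P - pt (fun Q => py f Q * px g Q) P :=
    pt_sub h1 h2 P
  rw [e0, pt_mul ((px_smooth hf).differentiable (by simp)) ((py_smooth hg).differentiable (by simp)),
    pt_mul ((py_smooth hf).differentiable (by simp)) ((px_smooth hg).differentiable (by simp)),
    congrFun (pt_px_comm hf) P, congrFun (pt_py_comm hf) P,
    congrFun (pt_px_comm hg) P, congrFun (pt_py_comm hg) P]
  simp only [J]; ring

lemma pz_J {f g : E4 → ℝ} (hf : ContDiff ℝ (⊤ : ℕ∞) f) (hg : ContDiff ℝ (⊤ : ℕ∞) g) (P : E4) :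
    pz (J f g) P = J (pz f) g P + J f (pz g) P := by
  have h1 : Differentiable ℝ (fun Q => px f Q * py g Q) :=
    ((px_smooth hf).mul (py_smooth hg)).differentiable (by simp)
  have h2 : Differentiable ℝ (fun Q => py f Q * px g Q) :=
    ((py_smooth hf).mul (px_smooth hg)).differentiable (by simp)
  have e0 : pz (J f g) P = pz (fun Q => px f Q * py g Q) P - pz (fun Q => py f Q * px g Q) P :=
    pz_sub h1 h2 P
  rw [e0, pz_mul ((px_smooth hf).differentiable (by simp)) ((py_smooth hg).differentiable (by simp)),
    pz_mul ((py_smooth hf).differentiable (by simp)) ((px_smooth hg).differentiable (by simp)),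
    congrFun (pz_px_comm hf) P, congrFun (pz_py_comm hf) P,
    congrFun (pz_px_comm hg) P, congrFun (pz_py_comm hg) P]
  simp only [J]; ring

lemma px_J {f g : E4 → ℝ} (hf : ContDiff ℝ (⊤ : ℕ∞) f) (hg : ContDiff ℝ (⊤ : ℕ∞) g) (P : E4) :
    px (J f g) P = px (px f) P * py g P + px f P * px (py g) P
      - px (py f) P * px g P - py f P * px (px g) P := by
  have h1 : Differentiable ℝ (fun Q => px f Q * py g Q) :=
    ((px_smooth hf).mul (py_smooth hg)).differentiable (by simp)
  have h2 : Differentiable ℝ (fun Q => py f Q * px g Q) :=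
    ((py_smooth hf).mul (px_smooth hg)).differentiable (by simp)
  have e0 : px (J f g) P = px (fun Q => px f Q * py g Q) P - px (fun Q => py f Q * px g Q) P :=
    px_sub h1 h2 P
  rw [e0, px_mul ((px_smooth hf).differentiable (by simp)) ((py_smooth hg).differentiable (by simp)),
    px_mul ((py_smooth hf).differentiable (by simp)) ((px_smooth hg).differentiable (by simp))]
  ring

lemma py_J {f g : E4 → ℝ} (hf : ContDiff ℝ (⊤ : ℕ∞) f) (hg : ContDiff ℝ (⊤ : ℕ∞) g) (P : E4) :
    py (J f g) P = px (py f) P * py g P + px f P * py (py g) P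
      - py (py f) P * px g P - py f P * px (py g) P := by
  have h1 : Differentiable ℝ (fun Q => px f Q * py g Q) :=
    ((px_smooth hf).mul (py_smooth hg)).differentiable (by simp)
  have h2 : Differentiable ℝ (fun Q => py f Q * px g Q) :=
    ((py_smooth hf).mul (px_smooth hg)).differentiable (by simp)
  have e0 : py (J f g) P = py (fun Q => px f Q * py g Q) P - py (fun Q => py f Q * px g Q) P :=
    py_sub h1 h2 P
  rw [e0, py_mul ((px_smooth hf).differentiable (by simp)) ((py_smooth hg).differentiable (by simp)),
    py_mul ((py_smooth hf).differentiable (by simp)) ((px_smooth hg).differentiable (by simp)),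
    congrFun (py_px_comm hf) P, congrFun (py_px_comm hg) P]
  ring

lemma J_add_left {a b : E4 → ℝ} (ha : ContDiff ℝ (⊤ : ℕ∞) a) (hb : ContDiff ℝ (⊤ : ℕ∞) b) (c : E4 → ℝ) (P : E4) :
    J (fun Q => a Q + b Q) c P = J a c P + J b c P := by
  simp only [J]
  rw [px_add (ha.differentiable (by simp)) (hb.differentiable (by simp)),
    py_add (ha.differentiable (by simp)) (hb.differentiable (by simp))]
  ring

lemma J_sub_left {a b : E4 → ℝ} (ha : ContDiff ℝ (⊤ : ℕ∞) a) (hb : ContDiff ℝ (⊤ : ℕ∞) b) (c : E4 → ℝ) (P : E4) :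
    J (fun Q => a Q - b Q) c P = J a c P - J b c P := by
  simp only [J]
  rw [px_sub (ha.differentiable (by simp)) (hb.differentiable (by simp)),
    py_sub (ha.differentiable (by simp)) (hb.differentiable (by simp))]
  ring

lemma J_sub_right {a b : E4 → ℝ} (c : E4 → ℝ) (ha : ContDiff ℝ (⊤ : ℕ∞) a) (hb : ContDiff ℝ (⊤ : ℕ∞) b) (P : E4) :
    J c (fun Q => a Q - b Q) P = J c a P - J c b P := by
  simp only [J]
  rw [px_sub (ha.differentiable (by simp)) (hb.differentiable (by simp)),
    py_sub (ha.differentiable (by simp)) (hb.differentiable (by simp))]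
  ring

/-- Jacobi identity in the convenient form. -/
lemma jacA {a b c : E4 → ℝ} (ha : ContDiff ℝ (⊤ : ℕ∞) a) (hb : ContDiff ℝ (⊤ : ℕ∞) b) (hc : ContDiff ℝ (⊤ : ℕ∞) c)
    (P : E4) : J (J a b) c P = J a (J b c) P - J b (J a c) P := by
  rw [J_apply (J a b) c, J_apply a (J b c), J_apply b (J a c),
    px_J ha hb P, py_J ha hb P, px_J hb hc P, py_J hb hc P, px_J ha hc P, py_J ha hc P]
  ring

theorem cotangent_to_tangent
    (u v psi1 psi2 : ℝ × ℝ × ℝ × ℝ → ℝ)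
    (hu : ContDiff ℝ (⊤ : ℕ∞) u) (hv : ContDiff ℝ (⊤ : ℕ∞) v)
    (hpsi1 : ContDiff ℝ (⊤ : ℕ∞) psi1) (hpsi2 : ContDiff ℝ (⊤ : ℕ∞) psi2)
    (hF1 : ∀ P, F1 u v P = 0) (hF2 : ∀ P, F2 u v P = 0)
    (hcot1 : ∀ P, lap (fun Q => pt psi1 Q - J u psi1 Q) P - pz psi2 P + J v psi2 P
      + J (lap u) psi1 P = 0)
    (hcot2 : ∀ P, lap (fun Q => pz psi1 Q - J v psi1 Q) P - pt psi2 P + J u psi2 P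
      + J (lap v) psi1 P = 0)
    (f1 f2 : ℝ × ℝ × ℝ × ℝ → ℝ)
    (hf1 : f1 = fun P => pt psi1 P - J u psi1 P)
    (hf2 : f2 = fun P => pz psi1 P - J v psi1 P) :
    (∀ P, pt (lap f1) P - pz (lap f2) P - J f1 (lap u) P - J u (lap f1) P
      + J f2 (lap v) P + J v (lap f2) P = 0) ∧
    (∀ P, pt f2 P - pz f1 P - J f1 v P - J u f2 P = 0) := by
  subst hf1 hf2
  -- basic differentiability facts
  have du := hu.differentiable (by simp)
  have dv := hv.differentiable (by simp)
  have d1 := hpsi1.differentiable (by simp)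
  have d2 := hpsi2.differentiable (by simp)
  -- F2 as a function identity
  have hv2 : pt v = fun Q => pz u Q + J u v Q := by
    funext Q; have := hF2 Q; simp only [F2] at this; linarith
  -- F1 as a function identity
  have hu2 : pt (lap u) = fun Q => pz (lap v) Q + (J u (lap u) Q - J v (lap v) Q) := by
    funext Q; have := hF1 Q; simp only [F1] at this; linarith
  -- cotangent identities as function identities
  have hl1 : lap (fun Q => pt psi1 Q - J u psi1 Q)
      = fun Q => (pz psi2 Q - J v psi2 Q) - J (lap u) psi1 Q := by
    funext Q; have := hcot1 Q; linarith
  have hl2 : lap (fun Q => pz psi1 Q - J v psi1 Q)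
      = fun Q => (pt psi2 Q - J u psi2 Q) - J (lap v) psi1 Q := by
    funext Q; have := hcot2 Q; linarith
  constructor
  · -- tangent equation 1
    intro P
    -- expand pt (lap f1)
    have t1 : pt (lap (fun Q => pt psi1 Q - J u psi1 Q)) P
        = pt (fun Q => pz psi2 Q - J v psi2 Q) P - pt (J (lap u) psi1) P := by
      rw [hl1]
      exact pt_sub (((pz_smooth hpsi2).sub (J_smooth hv hpsi2)).differentiable (by simp))
        ((J_smooth (lap_smooth hu) hpsi1).differentiable (by simp)) P
    have t2 : pt (fun Q => pz psi2 Q - J v psi2 Q) P = pt (pz psi2) P - pt (J v psi2) P :=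
      pt_sub ((pz_smooth hpsi2).differentiable (by simp))
        ((J_smooth hv hpsi2).differentiable (by simp)) P
    have t3 : pt (J v psi2) P = J (pt v) psi2 P + J v (pt psi2) P := pt_J hv hpsi2 P
    have t4 : pt (J (lap u) psi1) P = J (pt (lap u)) psi1 P + J (lap u) (pt psi1) P :=
      pt_J (lap_smooth hu) hpsi1 P
    have t5 : pt (pz psi2) P = pz (pt psi2) P := congrFun (pt_pz_comm hpsi2) P
    -- expand pz (lap f2)
    have z1 : pz (lap (fun Q => pz psi1 Q - J v psi1 Q)) P
        = pz (fun Q => pt psi2 Q - J u psi2 Q) P - pz (J (lap v) psi1) P := by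
      rw [hl2]
      exact pz_sub (((pt_smooth hpsi2).sub (J_smooth hu hpsi2)).differentiable (by simp))
        ((J_smooth (lap_smooth hv) hpsi1).differentiable (by simp)) P
    have z2 : pz (fun Q => pt psi2 Q - J u psi2 Q) P = pz (pt psi2) P - pz (J u psi2) P :=
      pz_sub ((pt_smooth hpsi2).differentiable (by simp))
        ((J_smooth hu hpsi2).differentiable (by simp)) P
    have z3 : pz (J u psi2) P = J (pz u) psi2 P + J u (pz psi2) P := pz_J hu hpsi2 P
    have z4 : pz (J (lap v) psi1) P = J (pz (lap v)) psi1 P + J (lap v) (pz psi1) P :=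
      pz_J (lap_smooth hv) hpsi1 P
    -- use the RMHD equations
    have j1 : J (pt v) psi2 P = J (pz u) psi2 P + J (J u v) psi2 P := by
      rw [hv2]; exact J_add_left (pz_smooth hu) (J_smooth hu hv) psi2 P
    have j2 : J (pt (lap u)) psi1 P
        = J (pz (lap v)) psi1 P + (J (J u (lap u)) psi1 P - J (J v (lap v)) psi1 P) := by
      rw [hu2, J_add_left (pz_smooth (lap_smooth hv))
        ((J_smooth hu (lap_smooth hu)).sub (J_smooth hv (lap_smooth hv))) psi1 P,
        J_sub_left (J_smooth hu (lap_smooth hu)) (J_smooth hv (lap_smooth hv)) psi1 P]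
    -- expand the remaining goal terms
    have g1 : J (fun Q => pt psi1 Q - J u psi1 Q) (lap u) P
        = J (pt psi1) (lap u) P - J (J u psi1) (lap u) P :=
      J_sub_left (pt_smooth hpsi1) (J_smooth hu hpsi1) (lap u) P
    have g2 : J u (lap (fun Q => pt psi1 Q - J u psi1 Q)) P
        = (J u (pz psi2) P - J u (J v psi2) P) - J u (J (lap u) psi1) P := by
      rw [hl1, J_sub_right u ((pz_smooth hpsi2).sub (J_smooth hv hpsi2))
        (J_smooth (lap_smooth hu) hpsi1) P,
        J_sub_right u (pz_smooth hpsi2) (J_smooth hv hpsi2) P]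
    have g3 : J (fun Q => pz psi1 Q - J v psi1 Q) (lap v) P
        = J (pz psi1) (lap v) P - J (J v psi1) (lap v) P :=
      J_sub_left (pz_smooth hpsi1) (J_smooth hv hpsi1) (lap v) P
    have g4 : J v (lap (fun Q => pz psi1 Q - J v psi1 Q)) P
        = (J v (pt psi2) P - J v (J u psi2) P) - J v (J (lap v) psi1) P := by
      rw [hl2, J_sub_right v ((pt_smooth hpsi2).sub (J_smooth hu hpsi2))
        (J_smooth (lap_smooth hv) hpsi1) P,
        J_sub_right v (pt_smooth hpsi2) (J_smooth hu hpsi2) P]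
    -- Jacobi identities
    have jA : J (J u v) psi2 P = J u (J v psi2) P - J v (J u psi2) P := jacA hu hv hpsi2 P
    have jB : J (J u (lap u)) psi1 P
        = J u (J (lap u) psi1) P - J (lap u) (J u psi1) P := jacA hu (lap_smooth hu) hpsi1 P
    have jC : J (J v (lap v)) psi1 P
        = J v (J (lap v) psi1) P - J (lap v) (J v psi1) P := jacA hv (lap_smooth hv) hpsi1 P
    -- antisymmetry conversions
    have a1 : J (pt psi1) (lap u) P = - J (lap u) (pt psi1) P := J_antisym _ _ P
    have a2 : J (pz psi1) (lap v) P = - J (lap v) (pz psi1) P := J_antisym _ _ P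
    have a3 : J (lap u) (J u psi1) P = - J (J u psi1) (lap u) P := J_antisym _ _ P
    have a4 : J (lap v) (J v psi1) P = - J (J v psi1) (lap v) P := J_antisym _ _ P
    linarith
  · -- tangent equation 2
    intro P
    have e1 : pt (fun Q => pz psi1 Q - J v psi1 Q) P = pt (pz psi1) P - pt (J v psi1) P :=
      pt_sub ((pz_smooth hpsi1).differentiable (by simp))
        ((J_smooth hv hpsi1).differentiable (by simp)) P
    have e2 : pt (J v psi1) P = J (pt v) psi1 P + J v (pt psi1) P := pt_J hv hpsi1 P
    have e3 : pz (fun Q => pt psi1 Q - J u psi1 Q) P = pz (pt psi1) P - pz (J u psi1) P :=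
      pz_sub ((pt_smooth hpsi1).differentiable (by simp))
        ((J_smooth hu hpsi1).differentiable (by simp)) P
    have e4 : pz (J u psi1) P = J (pz u) psi1 P + J u (pz psi1) P := pz_J hu hpsi1 P
    have e5 : pt (pz psi1) P = pz (pt psi1) P := congrFun (pt_pz_comm hpsi1) P
    have e6 : J (pt v) psi1 P = J (pz u) psi1 P + J (J u v) psi1 P := by
      rw [hv2]; exact J_add_left (pz_smooth hu) (J_smooth hu hv) psi1 P
    have e7 : J (fun Q => pt psi1 Q - J u psi1 Q) v P
        = J (pt psi1) v P - J (J u psi1) v P :=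
      J_sub_left (pt_smooth hpsi1) (J_smooth hu hpsi1) v P
    have e8 : J u (fun Q => pz psi1 Q - J v psi1 Q) P
        = J u (pz psi1) P - J u (J v psi1) P :=
      J_sub_right u (pz_smooth hpsi1) (J_smooth hv hpsi1) P
    have jA : J (J u v) psi1 P = J u (J v psi1) P - J v (J u psi1) P := jacA hu hv hpsi1 P
    have a1 : J (pt psi1) v P = - J v (pt psi1) P := J_antisym _ _ P
    have a2 : J v (J u psi1) P = - J (J u psi1) v P := J_antisym _ _ P
    linarith
end
end

section
/- Let u, v : ℝ⁴ → ℝ be a smooth solution of RMHD and let B : ℝ² → ℝ be a smooth function of (t, z) with B_tt = B_zz. Then the pair ψ₁ := B_z·u + B_t·v, ψ₂ := B_t·Δu + B_z·Δv satisfies the cotangent system of RMHD: Δ(ψ₁,t − J(u, ψ₁)) − ψ₂,z + J(v, ψ₂) + J(Δu, ψ₁) = 0 and Δ(ψ₁,z − J(v, ψ₁)) − ψ₂,t + J(u, ψ₂) + J(Δv, ψ₁) = 0 at every point. That is, Ψ₁(B) is a cosymmetry of RMHD. -/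
noncomputable section

/-- Partial derivative in `t` of a function of `(t, z)`. -/
def dt2 (f : ℝ × ℝ → ℝ) (Q : ℝ × ℝ) : ℝ := deriv (fun w => f (w, Q.2)) Q.1

/-- Partial derivative in `z` of a function of `(t, z)`. -/
def dz2 (f : ℝ × ℝ → ℝ) (Q : ℝ × ℝ) : ℝ := deriv (fun w => f (Q.1, w)) Q.2

namespace RMHDaux

abbrev E4 : Type := ℝ × ℝ × ℝ × ℝ
abbrev E2 : Type := ℝ × ℝ

def Dv (e : E4) (f : E4 → ℝ) : E4 → ℝ := fun P => fderiv ℝ f P e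
def D2 (e : E2) (g : E2 → ℝ) : E2 → ℝ := fun Q => fderiv ℝ g Q e

section curves
variable {f g : E4 → ℝ} {P : E4}

lemma curveT (P : E4) : HasDerivAt (fun w : ℝ => ((w, P.2.1, P.2.2.1, P.2.2.2) : E4))
    ((1,0,0,0) : E4) P.1 := (hasDerivAt_id _).prodMk (hasDerivAt_const _ _)
lemma curveX (P : E4) : HasDerivAt (fun w : ℝ => ((P.1, w, P.2.2.1, P.2.2.2) : E4))
    ((0,1,0,0) : E4) P.2.1 :=
  (hasDerivAt_const _ _).prodMk ((hasDerivAt_id _).prodMk (hasDerivAt_const _ _))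
lemma curveY (P : E4) : HasDerivAt (fun w : ℝ => ((P.1, P.2.1, w, P.2.2.2) : E4))
    ((0,0,1,0) : E4) P.2.2.1 :=
  (hasDerivAt_const _ _).prodMk ((hasDerivAt_const _ _).prodMk
    ((hasDerivAt_id _).prodMk (hasDerivAt_const _ _)))
lemma curveZ (P : E4) : HasDerivAt (fun w : ℝ => ((P.1, P.2.1, P.2.2.1, w) : E4))
    ((0,0,0,1) : E4) P.2.2.2 :=
  (hasDerivAt_const _ _).prodMk ((hasDerivAt_const _ _).prodMk
    ((hasDerivAt_const _ _).prodMk (hasDerivAt_id _)))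

lemma pt_eq_fderiv (hf : DifferentiableAt ℝ f P) : pt f P = fderiv ℝ f P (1,0,0,0) :=
  (hf.hasFDerivAt.comp_hasDerivAt P.1 (curveT P)).deriv
lemma px_eq_fderiv (hf : DifferentiableAt ℝ f P) : px f P = fderiv ℝ f P (0,1,0,0) :=
  (hf.hasFDerivAt.comp_hasDerivAt P.2.1 (curveX P)).deriv
lemma py_eq_fderiv (hf : DifferentiableAt ℝ f P) : py f P = fderiv ℝ f P (0,0,1,0) :=
  (hf.hasFDerivAt.comp_hasDerivAt P.2.2.1 (curveY P)).deriv
lemma pz_eq_fderiv (hf : DifferentiableAt ℝ f P) : pz f P = fderiv ℝ f P (0,0,0,1) :=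
  (hf.hasFDerivAt.comp_hasDerivAt P.2.2.2 (curveZ P)).deriv

lemma hasDerivAt_pt (hf : DifferentiableAt ℝ f P) :
    HasDerivAt (fun w => f (w, P.2.1, P.2.2.1, P.2.2.2)) (pt f P) P.1 := by
  rw [pt_eq_fderiv hf]; exact hf.hasFDerivAt.comp_hasDerivAt P.1 (curveT P)
lemma hasDerivAt_px (hf : DifferentiableAt ℝ f P) :
    HasDerivAt (fun w => f (P.1, w, P.2.2.1, P.2.2.2)) (px f P) P.2.1 := by
  rw [px_eq_fderiv hf]; exact hf.hasFDerivAt.comp_hasDerivAt P.2.1 (curveX P)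
lemma hasDerivAt_py (hf : DifferentiableAt ℝ f P) :
    HasDerivAt (fun w => f (P.1, P.2.1, w, P.2.2.2)) (py f P) P.2.2.1 := by
  rw [py_eq_fderiv hf]; exact hf.hasFDerivAt.comp_hasDerivAt P.2.2.1 (curveY P)
lemma hasDerivAt_pz (hf : DifferentiableAt ℝ f P) :
    HasDerivAt (fun w => f (P.1, P.2.1, P.2.2.1, w)) (pz f P) P.2.2.2 := by
  rw [pz_eq_fderiv hf]; exact hf.hasFDerivAt.comp_hasDerivAt P.2.2.2 (curveZ P)

-- product rules
lemma pt_mul (hf : DifferentiableAt ℝ f P) (hg : DifferentiableAt ℝ g P) :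
    pt (fun Q => f Q * g Q) P = pt f P * g P + f P * pt g P :=
  ((hasDerivAt_pt hf).mul (hasDerivAt_pt hg)).deriv
lemma px_mul (hf : DifferentiableAt ℝ f P) (hg : DifferentiableAt ℝ g P) :
    px (fun Q => f Q * g Q) P = px f P * g P + f P * px g P :=
  ((hasDerivAt_px hf).mul (hasDerivAt_px hg)).deriv
lemma py_mul (hf : DifferentiableAt ℝ f P) (hg : DifferentiableAt ℝ g P) :
    py (fun Q => f Q * g Q) P = py f P * g P + f P * py g P :=
  ((hasDerivAt_py hf).mul (hasDerivAt_py hg)).deriv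
lemma pz_mul (hf : DifferentiableAt ℝ f P) (hg : DifferentiableAt ℝ g P) :
    pz (fun Q => f Q * g Q) P = pz f P * g P + f P * pz g P :=
  ((hasDerivAt_pz hf).mul (hasDerivAt_pz hg)).deriv

-- sum rules
lemma pt_add (hf : DifferentiableAt ℝ f P) (hg : DifferentiableAt ℝ g P) :
    pt (fun Q => f Q + g Q) P = pt f P + pt g P :=
  ((hasDerivAt_pt hf).add (hasDerivAt_pt hg)).deriv
lemma px_add (hf : DifferentiableAt ℝ f P) (hg : DifferentiableAt ℝ g P) :
    px (fun Q => f Q + g Q) P = px f P + px g P :=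
  ((hasDerivAt_px hf).add (hasDerivAt_px hg)).deriv
lemma py_add (hf : DifferentiableAt ℝ f P) (hg : DifferentiableAt ℝ g P) :
    py (fun Q => f Q + g Q) P = py f P + py g P :=
  ((hasDerivAt_py hf).add (hasDerivAt_py hg)).deriv
lemma pz_add (hf : DifferentiableAt ℝ f P) (hg : DifferentiableAt ℝ g P) :
    pz (fun Q => f Q + g Q) P = pz f P + pz g P :=
  ((hasDerivAt_pz hf).add (hasDerivAt_pz hg)).deriv

end curves

-- smoothness of Dv
lemma Dv_contDiff {f : E4 → ℝ} (hf : ContDiff ℝ (⊤ : ℕ∞) f) (e : E4) : ContDiff ℝ (⊤ : ℕ∞) (Dv e f) :=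
  (hf.fderiv_right (by simp)).clm_apply contDiff_const
lemma D2_contDiff {g : E2 → ℝ} (hg : ContDiff ℝ (⊤ : ℕ∞) g) (e : E2) : ContDiff ℝ (⊤ : ℕ∞) (D2 e g) :=
  (hg.fderiv_right (by simp)).clm_apply contDiff_const

section eqDv
variable {f : E4 → ℝ}

lemma pt_eq_Dv (hf : ContDiff ℝ (⊤ : ℕ∞) f) : pt f = Dv (1,0,0,0) f :=
  funext fun P => pt_eq_fderiv (hf.differentiable (by simp) P)
lemma px_eq_Dv (hf : ContDiff ℝ (⊤ : ℕ∞) f) : px f = Dv (0,1,0,0) f :=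
  funext fun P => px_eq_fderiv (hf.differentiable (by simp) P)
lemma py_eq_Dv (hf : ContDiff ℝ (⊤ : ℕ∞) f) : py f = Dv (0,0,1,0) f :=
  funext fun P => py_eq_fderiv (hf.differentiable (by simp) P)
lemma pz_eq_Dv (hf : ContDiff ℝ (⊤ : ℕ∞) f) : pz f = Dv (0,0,0,1) f :=
  funext fun P => pz_eq_fderiv (hf.differentiable (by simp) P)

lemma pt_contDiff (hf : ContDiff ℝ (⊤ : ℕ∞) f) : ContDiff ℝ (⊤ : ℕ∞) (pt f) := by rw [pt_eq_Dv hf]; exact Dv_contDiff hf _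
lemma px_contDiff (hf : ContDiff ℝ (⊤ : ℕ∞) f) : ContDiff ℝ (⊤ : ℕ∞) (px f) := by rw [px_eq_Dv hf]; exact Dv_contDiff hf _
lemma py_contDiff (hf : ContDiff ℝ (⊤ : ℕ∞) f) : ContDiff ℝ (⊤ : ℕ∞) (py f) := by rw [py_eq_Dv hf]; exact Dv_contDiff hf _
lemma pz_contDiff (hf : ContDiff ℝ (⊤ : ℕ∞) f) : ContDiff ℝ (⊤ : ℕ∞) (pz f) := by rw [pz_eq_Dv hf]; exact Dv_contDiff hf _

end eqDv

-- symmetry of second derivatives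
lemma Dv_swap {f : E4 → ℝ} (hf : ContDiff ℝ (⊤ : ℕ∞) f) (e1 e2 : E4) :
    Dv e1 (Dv e2 f) = Dv e2 (Dv e1 f) := by
  funext P
  have hd : ∀ y, HasFDerivAt f (fderiv ℝ f y) y :=
    fun y => (hf.differentiable (by simp) y).hasFDerivAt
  have hf' : ContDiff ℝ (⊤ : ℕ∞) (fderiv ℝ f) := hf.fderiv_right (by simp)
  have hx : HasFDerivAt (fderiv ℝ f) (fderiv ℝ (fderiv ℝ f) P) P :=
    (hf'.differentiable (by simp) P).hasFDerivAt
  have key := second_derivative_symmetric hd hx e1 e2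
  have expand : ∀ e e' : E4, Dv e (Dv e' f) P = fderiv ℝ (fderiv ℝ f) P e e' := by
    intro e e'
    have : Dv e' f = fun Q => (fderiv ℝ f Q) e' := rfl
    rw [Dv, this, fderiv_clm_apply (hf'.differentiable (by simp) P) (differentiableAt_const e')]
    simp
  rw [expand, expand, key]

lemma D2_swap {g : E2 → ℝ} (hg : ContDiff ℝ (⊤ : ℕ∞) g) (e1 e2 : E2) :
    D2 e1 (D2 e2 g) = D2 e2 (D2 e1 g) := by
  funext Q
  have hd : ∀ y, HasFDerivAt g (fderiv ℝ g y) y :=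
    fun y => (hg.differentiable (by simp) y).hasFDerivAt
  have hg' : ContDiff ℝ (⊤ : ℕ∞) (fderiv ℝ g) := hg.fderiv_right (by simp)
  have hx : HasFDerivAt (fderiv ℝ g) (fderiv ℝ (fderiv ℝ g) Q) Q :=
    (hg'.differentiable (by simp) Q).hasFDerivAt
  have key := second_derivative_symmetric hd hx e1 e2
  have expand : ∀ e e' : E2, D2 e (D2 e' g) Q = fderiv ℝ (fderiv ℝ g) Q e e' := by
    intro e e'
    have : D2 e' g = fun R => (fderiv ℝ g R) e' := rfl
    rw [D2, this, fderiv_clm_apply (hg'.differentiable (by simp) Q) (differentiableAt_const e')]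
    simp
  rw [expand, expand, key]

end RMHDaux

namespace RMHDaux

-- 2D conversions
section twoD
variable {g : E2 → ℝ}

lemma curve2T (Q : E2) : HasDerivAt (fun w : ℝ => ((w, Q.2) : E2)) ((1,0) : E2) Q.1 :=
  (hasDerivAt_id _).prodMk (hasDerivAt_const _ _)
lemma curve2Z (Q : E2) : HasDerivAt (fun w : ℝ => ((Q.1, w) : E2)) ((0,1) : E2) Q.2 :=
  (hasDerivAt_const _ _).prodMk (hasDerivAt_id _)

lemma dt2_eq_D2 (hg : ContDiff ℝ (⊤ : ℕ∞) g) : dt2 g = D2 (1,0) g :=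
  funext fun Q => ((hg.differentiable (by simp) Q).hasFDerivAt.comp_hasDerivAt Q.1 (curve2T Q)).deriv
lemma dz2_eq_D2 (hg : ContDiff ℝ (⊤ : ℕ∞) g) : dz2 g = D2 (0,1) g :=
  funext fun Q => ((hg.differentiable (by simp) Q).hasFDerivAt.comp_hasDerivAt Q.2 (curve2Z Q)).deriv

lemma dt2_contDiff (hg : ContDiff ℝ (⊤ : ℕ∞) g) : ContDiff ℝ (⊤ : ℕ∞) (dt2 g) := by
  rw [dt2_eq_D2 hg]; exact D2_contDiff hg _
lemma dz2_contDiff (hg : ContDiff ℝ (⊤ : ℕ∞) g) : ContDiff ℝ (⊤ : ℕ∞) (dz2 g) := by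
  rw [dz2_eq_D2 hg]; exact D2_contDiff hg _

/-- Clairaut for functions on the plane. -/
lemma clairaut2 (hg : ContDiff ℝ (⊤ : ℕ∞) g) : dt2 (dz2 g) = dz2 (dt2 g) := by
  rw [dz2_eq_D2 hg, dt2_eq_D2 hg, dt2_eq_D2 (D2_contDiff hg _), dz2_eq_D2 (D2_contDiff hg _),
    D2_swap hg]

end twoD

-- pullbacks of 2D functions to 4D
def pb (h : E2 → ℝ) : E4 → ℝ := fun P => h (P.1, P.2.2.2)

lemma pb_contDiff {h : E2 → ℝ} (hh : ContDiff ℝ (⊤ : ℕ∞) h) : ContDiff ℝ (⊤ : ℕ∞) (pb h) :=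
  hh.comp (contDiff_fst.prodMk (contDiff_snd.comp (contDiff_snd.comp contDiff_snd)))

lemma px_pb (h : E2 → ℝ) : px (pb h) = fun _ => 0 := by
  funext P; simp [px, pb]
lemma py_pb (h : E2 → ℝ) : py (pb h) = fun _ => 0 := by
  funext P; simp [py, pb]
lemma pt_pb (h : E2 → ℝ) : pt (pb h) = pb (dt2 h) := rfl
lemma pz_pb (h : E2 → ℝ) : pz (pb h) = pb (dz2 h) := rfl

-- commuting partial derivatives in 4D
section swap4
variable {f : E4 → ℝ} (hf : ContDiff ℝ (⊤ : ℕ∞) f)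

lemma px_pt (hf : ContDiff ℝ (⊤ : ℕ∞) f) : px (pt f) = pt (px f) := by
  rw [pt_eq_Dv hf, px_eq_Dv hf, px_eq_Dv (Dv_contDiff hf _), pt_eq_Dv (Dv_contDiff hf _),
    Dv_swap hf]
lemma py_pt (hf : ContDiff ℝ (⊤ : ℕ∞) f) : py (pt f) = pt (py f) := by
  rw [pt_eq_Dv hf, py_eq_Dv hf, py_eq_Dv (Dv_contDiff hf _), pt_eq_Dv (Dv_contDiff hf _),
    Dv_swap hf]
lemma px_pz (hf : ContDiff ℝ (⊤ : ℕ∞) f) : px (pz f) = pz (px f) := by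
  rw [pz_eq_Dv hf, px_eq_Dv hf, px_eq_Dv (Dv_contDiff hf _), pz_eq_Dv (Dv_contDiff hf _),
    Dv_swap hf]
lemma py_pz (hf : ContDiff ℝ (⊤ : ℕ∞) f) : py (pz f) = pz (py f) := by
  rw [pz_eq_Dv hf, py_eq_Dv hf, py_eq_Dv (Dv_contDiff hf _), pz_eq_Dv (Dv_contDiff hf _),
    Dv_swap hf]

lemma lap_contDiff (hf : ContDiff ℝ (⊤ : ℕ∞) f) : ContDiff ℝ (⊤ : ℕ∞) (lap f) := by
  have : lap f = fun P => px (px f) P + py (py f) P := rfl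
  rw [this]
  exact (px_contDiff (px_contDiff hf)).add (py_contDiff (py_contDiff hf))

/-- `Δ` commutes with `∂_t`. -/
lemma lap_pt (hf : ContDiff ℝ (⊤ : ℕ∞) f) : lap (pt f) = pt (lap f) := by
  funext P
  have e1 : lap (pt f) P = px (px (pt f)) P + py (py (pt f)) P := rfl
  have e2 : px (px (pt f)) = px (pt (px f)) := by rw [px_pt hf]
  have e3 : px (pt (px f)) = pt (px (px f)) := px_pt (px_contDiff hf)
  have e4 : py (py (pt f)) = py (pt (py f)) := by rw [py_pt hf]
  have e5 : py (pt (py f)) = pt (py (py f)) := py_pt (py_contDiff hf)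
  have e6 : pt (lap f) P = pt (fun Q => px (px f) Q + py (py f) Q) P := rfl
  rw [e1, e2, e3, e4, e5, e6,
    pt_add ((px_contDiff (px_contDiff hf)).differentiable (by simp) P)
      ((py_contDiff (py_contDiff hf)).differentiable (by simp) P)]

/-- `Δ` commutes with `∂_z`. -/
lemma lap_pz (hf : ContDiff ℝ (⊤ : ℕ∞) f) : lap (pz f) = pz (lap f) := by
  funext P
  have e1 : lap (pz f) P = px (px (pz f)) P + py (py (pz f)) P := rfl
  have e2 : px (px (pz f)) = px (pz (px f)) := by rw [px_pz hf]
  have e3 : px (pz (px f)) = pz (px (px f)) := px_pz (px_contDiff hf)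
  have e4 : py (py (pz f)) = py (pz (py f)) := by rw [py_pz hf]
  have e5 : py (pz (py f)) = pz (py (py f)) := py_pz (py_contDiff hf)
  have e6 : pz (lap f) P = pz (fun Q => px (px f) Q + py (py f) Q) P := rfl
  rw [e1, e2, e3, e4, e5, e6,
    pz_add ((px_contDiff (px_contDiff hf)).differentiable (by simp) P)
      ((py_contDiff (py_contDiff hf)).differentiable (by simp) P)]

end swap4

-- Laplacian of a pullback times a smooth function
lemma px_pb_mul {h : E2 → ℝ} {f : E4 → ℝ} (hh : ContDiff ℝ (⊤ : ℕ∞) h) (hf : ContDiff ℝ (⊤ : ℕ∞) f) :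
    px (fun Q => pb h Q * f Q) = fun Q => pb h Q * px f Q := by
  funext P
  rw [px_mul ((pb_contDiff hh).differentiable (by simp) P) (hf.differentiable (by simp) P),
    px_pb]
  ring

lemma py_pb_mul {h : E2 → ℝ} {f : E4 → ℝ} (hh : ContDiff ℝ (⊤ : ℕ∞) h) (hf : ContDiff ℝ (⊤ : ℕ∞) f) :
    py (fun Q => pb h Q * f Q) = fun Q => pb h Q * py f Q := by
  funext P
  rw [py_mul ((pb_contDiff hh).differentiable (by simp) P) (hf.differentiable (by simp) P),
    py_pb]
  ring

lemma lap_pb_mul {h : E2 → ℝ} {f : E4 → ℝ} (hh : ContDiff ℝ (⊤ : ℕ∞) h) (hf : ContDiff ℝ (⊤ : ℕ∞) f) :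
    lap (fun Q => pb h Q * f Q) = fun Q => pb h Q * lap f Q := by
  funext P
  have e1 : lap (fun Q => pb h Q * f Q) P
      = px (px (fun Q => pb h Q * f Q)) P + py (py (fun Q => pb h Q * f Q)) P := rfl
  rw [e1, px_pb_mul hh hf, py_pb_mul hh hf, px_pb_mul hh (px_contDiff hf),
    py_pb_mul hh (py_contDiff hf)]
  show pb h P * px (px f) P + pb h P * py (py f) P = pb h P * (px (px f) P + py (py f) P)
  ring

lemma lap_add {f g : E4 → ℝ} (hf : ContDiff ℝ (⊤ : ℕ∞) f) (hg : ContDiff ℝ (⊤ : ℕ∞) g) :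
    lap (fun Q => f Q + g Q) = fun Q => lap f Q + lap g Q := by
  funext P
  have hx : px (fun Q => f Q + g Q) = fun Q => px f Q + px g Q :=
    funext fun P => px_add (hf.differentiable (by simp) P) (hg.differentiable (by simp) P)
  have hy : py (fun Q => f Q + g Q) = fun Q => py f Q + py g Q :=
    funext fun P => py_add (hf.differentiable (by simp) P) (hg.differentiable (by simp) P)
  have e1 : lap (fun Q => f Q + g Q) P
      = px (px (fun Q => f Q + g Q)) P + py (py (fun Q => f Q + g Q)) P := rfl
  rw [e1, hx, hy,
    px_add ((px_contDiff hf).differentiable (by simp) P) ((px_contDiff hg).differentiable (by simp) P),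
    py_add ((py_contDiff hf).differentiable (by simp) P) ((py_contDiff hg).differentiable (by simp) P)]
  show px (px f) P + px (px g) P + (py (py f) P + py (py g) P)
      = px (px f) P + py (py f) P + (px (px g) P + py (py g) P)
  ring

end RMHDaux

namespace RMHDaux

variable {h k : E2 → ℝ} {f g : E4 → ℝ}

lemma pt_pb_mul (hh : ContDiff ℝ (⊤ : ℕ∞) h) (hf : ContDiff ℝ (⊤ : ℕ∞) f) :
    pt (fun Q => pb h Q * f Q) = fun Q => pb (dt2 h) Q * f Q + pb h Q * pt f Q := by
  funext P
  rw [pt_mul ((pb_contDiff hh).differentiable (by simp) P) (hf.differentiable (by simp) P)]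
  rfl

lemma pz_pb_mul (hh : ContDiff ℝ (⊤ : ℕ∞) h) (hf : ContDiff ℝ (⊤ : ℕ∞) f) :
    pz (fun Q => pb h Q * f Q) = fun Q => pb (dz2 h) Q * f Q + pb h Q * pz f Q := by
  funext P
  rw [pz_mul ((pb_contDiff hh).differentiable (by simp) P) (hf.differentiable (by simp) P)]
  rfl

lemma pt_pb_comb (hh : ContDiff ℝ (⊤ : ℕ∞) h) (hk : ContDiff ℝ (⊤ : ℕ∞) k)
    (hf : ContDiff ℝ (⊤ : ℕ∞) f) (hg : ContDiff ℝ (⊤ : ℕ∞) g) :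
    pt (fun Q => pb h Q * f Q + pb k Q * g Q)
      = fun Q => (pb (dt2 h) Q * f Q + pb h Q * pt f Q)
          + (pb (dt2 k) Q * g Q + pb k Q * pt g Q) := by
  funext P
  rw [pt_add (((pb_contDiff hh).mul hf).differentiable (by simp) P)
    (((pb_contDiff hk).mul hg).differentiable (by simp) P),
    congrFun (pt_pb_mul hh hf) P, congrFun (pt_pb_mul hk hg) P]

lemma pz_pb_comb (hh : ContDiff ℝ (⊤ : ℕ∞) h) (hk : ContDiff ℝ (⊤ : ℕ∞) k)
    (hf : ContDiff ℝ (⊤ : ℕ∞) f) (hg : ContDiff ℝ (⊤ : ℕ∞) g) :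
    pz (fun Q => pb h Q * f Q + pb k Q * g Q)
      = fun Q => (pb (dz2 h) Q * f Q + pb h Q * pz f Q)
          + (pb (dz2 k) Q * g Q + pb k Q * pz g Q) := by
  funext P
  rw [pz_add (((pb_contDiff hh).mul hf).differentiable (by simp) P)
    (((pb_contDiff hk).mul hg).differentiable (by simp) P),
    congrFun (pz_pb_mul hh hf) P, congrFun (pz_pb_mul hk hg) P]

lemma px_pb_comb (hh : ContDiff ℝ (⊤ : ℕ∞) h) (hk : ContDiff ℝ (⊤ : ℕ∞) k)
    (hf : ContDiff ℝ (⊤ : ℕ∞) f) (hg : ContDiff ℝ (⊤ : ℕ∞) g) :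
    px (fun Q => pb h Q * f Q + pb k Q * g Q)
      = fun Q => pb h Q * px f Q + pb k Q * px g Q := by
  funext P
  rw [px_add (((pb_contDiff hh).mul hf).differentiable (by simp) P)
    (((pb_contDiff hk).mul hg).differentiable (by simp) P),
    congrFun (px_pb_mul hh hf) P, congrFun (px_pb_mul hk hg) P]

lemma py_pb_comb (hh : ContDiff ℝ (⊤ : ℕ∞) h) (hk : ContDiff ℝ (⊤ : ℕ∞) k)
    (hf : ContDiff ℝ (⊤ : ℕ∞) f) (hg : ContDiff ℝ (⊤ : ℕ∞) g) :
    py (fun Q => pb h Q * f Q + pb k Q * g Q)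
      = fun Q => pb h Q * py f Q + pb k Q * py g Q := by
  funext P
  rw [py_add (((pb_contDiff hh).mul hf).differentiable (by simp) P)
    (((pb_contDiff hk).mul hg).differentiable (by simp) P),
    congrFun (py_pb_mul hh hf) P, congrFun (py_pb_mul hk hg) P]

lemma lap_pb_comb (hh : ContDiff ℝ (⊤ : ℕ∞) h) (hk : ContDiff ℝ (⊤ : ℕ∞) k)
    (hf : ContDiff ℝ (⊤ : ℕ∞) f) (hg : ContDiff ℝ (⊤ : ℕ∞) g) :
    lap (fun Q => pb h Q * f Q + pb k Q * g Q)
      = fun Q => pb h Q * lap f Q + pb k Q * lap g Q := by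
  rw [lap_add ((pb_contDiff hh).mul hf) ((pb_contDiff hk).mul hg),
    lap_pb_mul hh hf, lap_pb_mul hk hg]

end RMHDaux

open RMHDaux in
theorem Psi1_cosymmetry_of_rmhd
    (u v : ℝ × ℝ × ℝ × ℝ → ℝ) (B : ℝ × ℝ → ℝ)
    (hu : ContDiff ℝ (⊤ : ℕ∞) u) (hv : ContDiff ℝ (⊤ : ℕ∞) v) (hB : ContDiff ℝ (⊤ : ℕ∞) B)
    (hF1 : ∀ P, F1 u v P = 0) (hF2 : ∀ P, F2 u v P = 0)
    (hwave : ∀ Q, dt2 (dt2 B) Q = dz2 (dz2 B) Q)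
    (psi1 psi2 : ℝ × ℝ × ℝ × ℝ → ℝ)
    (hpsi1 : psi1 = fun P => dz2 B (P.1, P.2.2.2) * u P + dt2 B (P.1, P.2.2.2) * v P)
    (hpsi2 : psi2 = fun P => dt2 B (P.1, P.2.2.2) * lap u P + dz2 B (P.1, P.2.2.2) * lap v P) :
    (∀ P, lap (fun Q => pt psi1 Q - J u psi1 Q) P - pz psi2 P + J v psi2 P
      + J (lap u) psi1 P = 0) ∧
    (∀ P, lap (fun Q => pz psi1 Q - J v psi1 Q) P - pt psi2 P + J u psi2 P
      + J (lap v) psi1 P = 0) := by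
  -- notation: a2 = B_z, b2 = B_t (functions of (t,z))
  have ha2 : ContDiff ℝ (⊤ : ℕ∞) (dz2 B) := dz2_contDiff hB
  have hb2 : ContDiff ℝ (⊤ : ℕ∞) (dt2 B) := dt2_contDiff hB
  have hLu : ContDiff ℝ (⊤ : ℕ∞) (lap u) := lap_contDiff hu
  have hLv : ContDiff ℝ (⊤ : ℕ∞) (lap v) := lap_contDiff hv
  have hpsi1f : psi1 = fun Q => pb (dz2 B) Q * u Q + pb (dt2 B) Q * v Q := hpsi1
  have hpsi2f : psi2 = fun Q => pb (dt2 B) Q * lap u Q + pb (dz2 B) Q * lap v Q := hpsi2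
  have hC : dt2 (dz2 B) = dz2 (dt2 B) := clairaut2 hB
  have hF1' : ∀ P, pt (lap u) P - pz (lap v) P
      - (px u P * py (lap u) P - py u P * px (lap u) P)
      + (px v P * py (lap v) P - py v P * px (lap v) P) = 0 := fun P => hF1 P
  have hF2' : ∀ P, pt v P - pz u P - (px u P * py v P - py u P * px v P) = 0 :=
    fun P => hF2 P
  constructor
  · -- first cotangent equation
    have K1 : (fun Q => pt psi1 Q - J u psi1 Q)
        = fun Q => (pb (dt2 (dz2 B)) Q * u Q + pb (dt2 (dt2 B)) Q * v Q)
            + (pb (dz2 B) Q * pt u Q + pb (dt2 B) Q * pz u Q) := by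
      rw [hpsi1f]
      funext Q
      simp only [J]
      rw [congrFun (pt_pb_comb ha2 hb2 hu hv) Q,
        congrFun (px_pb_comb ha2 hb2 hu hv) Q,
        congrFun (py_pb_comb ha2 hb2 hu hv) Q]
      linear_combination pb (dt2 B) Q * hF2' Q
    intro P
    rw [K1]
    rw [lap_add ((pb_contDiff (dt2_contDiff ha2)).mul hu |>.add
          ((pb_contDiff (dt2_contDiff hb2)).mul hv))
        ((pb_contDiff ha2).mul (pt_contDiff hu) |>.add
          ((pb_contDiff hb2).mul (pz_contDiff hu))),
      lap_pb_comb (dt2_contDiff ha2) (dt2_contDiff hb2) hu hv,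
      lap_pb_comb ha2 hb2 (pt_contDiff hu) (pz_contDiff hu),
      lap_pt hu, lap_pz hu]
    simp only [J]
    rw [hpsi1f, hpsi2f,
      pz_pb_comb hb2 ha2 hLu hLv,
      px_pb_comb hb2 ha2 hLu hLv, py_pb_comb hb2 ha2 hLu hLv,
      px_pb_comb ha2 hb2 hu hv, py_pb_comb ha2 hb2 hu hv]
    have e1 : pb (dt2 (dz2 B)) P = pb (dz2 (dt2 B)) P := by rw [hC]
    have e2 : pb (dt2 (dt2 B)) P = pb (dz2 (dz2 B)) P := hwave (P.1, P.2.2.2)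
    linear_combination lap u P * e1 + lap v P * e2 + pb (dz2 B) P * hF1' P
  · -- second cotangent equation
    have K2 : (fun Q => pz psi1 Q - J v psi1 Q)
        = fun Q => (pb (dz2 (dz2 B)) Q * u Q + pb (dz2 (dt2 B)) Q * v Q)
            + (pb (dz2 B) Q * pt v Q + pb (dt2 B) Q * pz v Q) := by
      rw [hpsi1f]
      funext Q
      simp only [J]
      rw [congrFun (pz_pb_comb ha2 hb2 hu hv) Q,
        congrFun (px_pb_comb ha2 hb2 hu hv) Q,
        congrFun (py_pb_comb ha2 hb2 hu hv) Q]
      linear_combination (-(pb (dz2 B) Q)) * hF2' Q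
    intro P
    rw [K2]
    rw [lap_add ((pb_contDiff (dz2_contDiff ha2)).mul hu |>.add
          ((pb_contDiff (dz2_contDiff hb2)).mul hv))
        ((pb_contDiff ha2).mul (pt_contDiff hv) |>.add
          ((pb_contDiff hb2).mul (pz_contDiff hv))),
      lap_pb_comb (dz2_contDiff ha2) (dz2_contDiff hb2) hu hv,
      lap_pb_comb ha2 hb2 (pt_contDiff hv) (pz_contDiff hv),
      lap_pt hv, lap_pz hv]
    simp only [J]
    rw [hpsi1f, hpsi2f,
      pt_pb_comb hb2 ha2 hLu hLv,
      px_pb_comb hb2 ha2 hLu hLv, py_pb_comb hb2 ha2 hLu hLv,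
      px_pb_comb ha2 hb2 hu hv, py_pb_comb ha2 hb2 hu hv]
    have e1 : pb (dt2 (dz2 B)) P = pb (dz2 (dt2 B)) P := by rw [hC]
    have e2 : pb (dt2 (dt2 B)) P = pb (dz2 (dz2 B)) P := hwave (P.1, P.2.2.2)
    linear_combination (-(lap v P)) * e1 + (-(lap u P)) * e2 - pb (dt2 B) P * hF1' P
end
end

section
/- Let u, v : ℝ⁴ → ℝ be a smooth solution of RMHD and let B : ℝ² → ℝ be a smooth function of (t, z) with B_tt = B_zz. Set ψ₁ := B_z·u + B_t·v. Then at every point ψ₁,t − J(u, ψ₁) = B_z·u_t + B_t·u_z + B_tz·u + B_tt·v and ψ₁,z − J(v, ψ₁) = B_z·v_t + B_t·v_z + B_tt·u + B_tz·v. That is, the Bäcklund transformation maps the cosymmetry Ψ₁(B) to minus the symmetry Φ₁(B) of RMHD. -/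
noncomputable section

variable {u v : ℝ × ℝ × ℝ × ℝ → ℝ} {B g : ℝ × ℝ → ℝ}

lemma hd1 (hg : Differentiable ℝ g) (a b : ℝ) :
    HasDerivAt (fun w => g (w, b)) (fderiv ℝ g (a, b) (1, 0)) a := by
  have h1 : HasDerivAt (fun w : ℝ => (w, b)) ((1 : ℝ), (0 : ℝ)) a :=
    (hasDerivAt_id a).prodMk (hasDerivAt_const a b)
  exact (hg (a, b)).hasFDerivAt.comp_hasDerivAt a h1

lemma hd2 (hg : Differentiable ℝ g) (a b : ℝ) :
    HasDerivAt (fun w => g (a, w)) (fderiv ℝ g (a, b) (0, 1)) b := by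
  have h1 : HasDerivAt (fun w : ℝ => (a, w)) ((0 : ℝ), (1 : ℝ)) b :=
    (hasDerivAt_const b a).prodMk (hasDerivAt_id b)
  exact (hg (a, b)).hasFDerivAt.comp_hasDerivAt b h1

lemma dt2_eq (hg : Differentiable ℝ g) (Q : ℝ × ℝ) : dt2 g Q = fderiv ℝ g Q (1, 0) := by
  rw [dt2, (hd1 hg Q.1 Q.2).deriv]

lemma dz2_eq (hg : Differentiable ℝ g) (Q : ℝ × ℝ) : dz2 g Q = fderiv ℝ g Q (0, 1) := by
  rw [dz2, (hd2 hg Q.1 Q.2).deriv]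

lemma cd_dt2 (hg : ContDiff ℝ (⊤ : ℕ∞) g) : ContDiff ℝ (⊤ : ℕ∞) (dt2 g) := by
  have : dt2 g = fun Q => fderiv ℝ g Q (1, 0) :=
    funext fun Q => dt2_eq (hg.differentiable (by simp)) Q
  rw [this]; exact (hg.fderiv_right (by simp)).clm_apply contDiff_const

lemma cd_dz2 (hg : ContDiff ℝ (⊤ : ℕ∞) g) : ContDiff ℝ (⊤ : ℕ∞) (dz2 g) := by
  have : dz2 g = fun Q => fderiv ℝ g Q (0, 1) :=
    funext fun Q => dz2_eq (hg.differentiable (by simp)) Q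
  rw [this]; exact (hg.fderiv_right (by simp)).clm_apply contDiff_const

lemma schwarz (hg : ContDiff ℝ (⊤ : ℕ∞) g) (Q : ℝ × ℝ) : dt2 (dz2 g) Q = dz2 (dt2 g) Q := by
  have hsymm : IsSymmSndFDerivAt ℝ g Q := hg.contDiffAt.isSymmSndFDerivAt (by rw [minSmoothness_of_isRCLikeNormedField]; exact WithTop.coe_le_coe.mpr le_top)
  have hdg : Differentiable ℝ (fderiv ℝ g) := (hg.fderiv_right (m := (⊤ : ℕ∞)) (by simp)).differentiable (by simp)
  have e1 : dz2 g = fun Q => fderiv ℝ g Q (0, 1) :=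
    funext fun Q => dz2_eq (hg.differentiable (by simp)) Q
  have e2 : dt2 g = fun Q => fderiv ℝ g Q (1, 0) :=
    funext fun Q => dt2_eq (hg.differentiable (by simp)) Q
  rw [dt2_eq ((cd_dz2 hg).differentiable (by simp)), dz2_eq ((cd_dt2 hg).differentiable (by simp)),
    e1, e2, fderiv_clm_apply (hdg Q) (differentiableAt_const _),
    fderiv_clm_apply (hdg Q) (differentiableAt_const _)]
  simp [hsymm (1, 0) (0, 1)]


theorem backlund_maps_Psi1_to_minus_Phi1
    (u v : ℝ × ℝ × ℝ × ℝ → ℝ) (B : ℝ × ℝ → ℝ)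
    (hu : ContDiff ℝ (⊤ : ℕ∞) u) (hv : ContDiff ℝ (⊤ : ℕ∞) v) (hB : ContDiff ℝ (⊤ : ℕ∞) B)
    (hF1 : ∀ P, F1 u v P = 0) (hF2 : ∀ P, F2 u v P = 0)
    (hwave : ∀ Q, dt2 (dt2 B) Q = dz2 (dz2 B) Q)
    (psi1 : ℝ × ℝ × ℝ × ℝ → ℝ)
    (hpsi1 : psi1 = fun P => dz2 B (P.1, P.2.2.2) * u P + dt2 B (P.1, P.2.2.2) * v P) :
    (∀ P, pt psi1 P - J u psi1 P =
      dz2 B (P.1, P.2.2.2) * pt u P + dt2 B (P.1, P.2.2.2) * pz u P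
      + dt2 (dz2 B) (P.1, P.2.2.2) * u P + dt2 (dt2 B) (P.1, P.2.2.2) * v P) ∧
    (∀ P, pz psi1 P - J v psi1 P =
      dz2 B (P.1, P.2.2.2) * pt v P + dt2 B (P.1, P.2.2.2) * pz v P
      + dt2 (dt2 B) (P.1, P.2.2.2) * u P + dt2 (dz2 B) (P.1, P.2.2.2) * v P) := by
  have hud := hu.differentiable (by simp)
  have hvd := hv.differentiable (by simp)
  have hBz := (cd_dz2 hB).differentiable (by simp)
  have hBt := (cd_dt2 hB).differentiable (by simp)
  refine ⟨fun P => ?_, fun P => ?_⟩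
  · obtain ⟨t, x, y, z⟩ := P
    have hF2' := hF2 (t, x, y, z)
    simp only [F2, J, pt, px, py, pz] at hF2'
    have dut : DifferentiableAt ℝ (fun w => u (w, x, y, z)) t := by fun_prop
    have dvt : DifferentiableAt ℝ (fun w => v (w, x, y, z)) t := by fun_prop
    have dux : DifferentiableAt ℝ (fun w => u (t, w, y, z)) x := by fun_prop
    have dvx : DifferentiableAt ℝ (fun w => v (t, w, y, z)) x := by fun_prop
    have duy : DifferentiableAt ℝ (fun w => u (t, x, w, z)) y := by fun_prop
    have dvy : DifferentiableAt ℝ (fun w => v (t, x, w, z)) y := by fun_prop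
    have duz : DifferentiableAt ℝ (fun w => u (t, x, y, w)) z := by fun_prop
    have dvz : DifferentiableAt ℝ (fun w => v (t, x, y, w)) z := by fun_prop
    have dBzt : DifferentiableAt ℝ (fun w => dz2 B (w, z)) t := by fun_prop
    have dBtt : DifferentiableAt ℝ (fun w => dt2 B (w, z)) t := by fun_prop
    have dBzz : DifferentiableAt ℝ (fun w => dz2 B (t, w)) z := by fun_prop
    have dBtz : DifferentiableAt ℝ (fun w => dt2 B (t, w)) z := by fun_prop
    have e1 : dt2 (dz2 B) (t, z) = deriv (fun w => dz2 B (w, z)) t := rfl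
    have e2 : dt2 (dt2 B) (t, z) = deriv (fun w => dt2 B (w, z)) t := rfl
    have e3 : dz2 (dz2 B) (t, z) = deriv (fun w => dz2 B (t, w)) z := rfl
    have e4 : dz2 (dt2 B) (t, z) = deriv (fun w => dt2 B (t, w)) z := rfl
    simp only [hpsi1, pt, px, py, pz, J]
    rw [e1, e2,
      deriv_fun_add (dBzt.fun_mul dut) (dBtt.fun_mul dvt), deriv_fun_mul dBzt dut, deriv_fun_mul dBtt dvt,
      deriv_fun_add ((differentiableAt_const _).fun_mul dux) ((differentiableAt_const _).fun_mul dvx),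
      deriv_const_mul _ dux, deriv_const_mul _ dvx,
      deriv_fun_add ((differentiableAt_const _).fun_mul duy) ((differentiableAt_const _).fun_mul dvy),
      deriv_const_mul _ duy, deriv_const_mul _ dvy]
    linear_combination dt2 B (t, z) * hF2'
  · obtain ⟨t, x, y, z⟩ := P
    have hF2' := hF2 (t, x, y, z)
    simp only [F2, J, pt, px, py, pz] at hF2'
    have dut : DifferentiableAt ℝ (fun w => u (w, x, y, z)) t := by fun_prop
    have dvt : DifferentiableAt ℝ (fun w => v (w, x, y, z)) t := by fun_prop
    have dux : DifferentiableAt ℝ (fun w => u (t, w, y, z)) x := by fun_prop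
    have dvx : DifferentiableAt ℝ (fun w => v (t, w, y, z)) x := by fun_prop
    have duy : DifferentiableAt ℝ (fun w => u (t, x, w, z)) y := by fun_prop
    have dvy : DifferentiableAt ℝ (fun w => v (t, x, w, z)) y := by fun_prop
    have duz : DifferentiableAt ℝ (fun w => u (t, x, y, w)) z := by fun_prop
    have dvz : DifferentiableAt ℝ (fun w => v (t, x, y, w)) z := by fun_prop
    have dBzt : DifferentiableAt ℝ (fun w => dz2 B (w, z)) t := by fun_prop
    have dBtt : DifferentiableAt ℝ (fun w => dt2 B (w, z)) t := by fun_prop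
    have dBzz : DifferentiableAt ℝ (fun w => dz2 B (t, w)) z := by fun_prop
    have dBtz : DifferentiableAt ℝ (fun w => dt2 B (t, w)) z := by fun_prop
    have e1 : dt2 (dz2 B) (t, z) = deriv (fun w => dz2 B (w, z)) t := rfl
    have e2 : dt2 (dt2 B) (t, z) = deriv (fun w => dt2 B (w, z)) t := rfl
    have e3 : dz2 (dz2 B) (t, z) = deriv (fun w => dz2 B (t, w)) z := rfl
    have e4 : dz2 (dt2 B) (t, z) = deriv (fun w => dt2 B (t, w)) z := rfl
    simp only [hpsi1, pt, px, py, pz, J]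
    rw [hwave (t, z), schwarz hB (t, z), e3, e4,
      deriv_fun_add (dBzz.fun_mul duz) (dBtz.fun_mul dvz), deriv_fun_mul dBzz duz, deriv_fun_mul dBtz dvz,
      deriv_fun_add ((differentiableAt_const _).fun_mul dux) ((differentiableAt_const _).fun_mul dvx),
      deriv_const_mul _ dux, deriv_const_mul _ dvx,
      deriv_fun_add ((differentiableAt_const _).fun_mul duy) ((differentiableAt_const _).fun_mul dvy),
      deriv_const_mul _ duy, deriv_const_mul _ dvy]
    linear_combination (-(dz2 B (t, z))) * hF2'
end
end
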